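/- arXiv:2008.03855 — 8 statements merged into one kernel-verified Lean document; each statement's English description precedes it below -/
import Mathlib

section
/- Let p₁ = e^{−1/2} and p₀ = 1 − p₁. Then the quantity A := ∑_{k=0}^{∞} (1 + k²) p₀ p₁^{k²} + ∑_{k=2}^{∞} p₁^{k} p₀ ( ∑_{j=1}^{k(k−1)} (k + 1 + j) p₁^{j−1} p₀ ) satisfies 3.329 < A < 3.330. -/
/-!
The inner sum is arithmetico-geometric and has a closed form. Substituting it, the `k`-th term of
the second series becomes `g k - f (k + 2) - p₁ ^ ((k + 2) ^ 2)`, where `f` is the term of the first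
series and `∑ g` is an explicit geometric-type series. So the two series cancel up to `f 0 + f 1`,
and `A = (1 + p₁ ^ 2) / p₀ - ∑_{k ≥ 2} p₁ ^ (k ^ 2)`. The theta tail is `p₁ ^ 4 + p₁ ^ 9 + …` with a
geometric bound on what follows, and `p₁ = e^{-1/2}` is pinned down by the known bounds on `e⁻¹`.
-/

open Finset

theorem one_sub_sq_mul_sum_Icc_add_mul_pow {R : Type*} [CommRing R] (q c : R) (m : ℕ) :
    (1 - q) ^ 2 * ∑ j ∈ Icc 1 m, (c + j) * q ^ (j - 1) =
      c * (1 - q) + 1 - q ^ m * ((c + m + 1) * (1 - q) + q) := by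
  induction m with
  | zero => rw [Icc_eq_empty_of_lt zero_lt_one, sum_empty]; ring
  | succ n ih =>
    rw [sum_Icc_succ_top (by omega)]
    push_cast
    linear_combination ih

theorem summable_natCast_pow_mul_pow_sq {q : ℝ} (hq0 : 0 ≤ q) (hq1 : q < 1) (i : ℕ) :
    Summable fun k : ℕ => (k : ℝ) ^ i * q ^ (k ^ 2) :=
  (summable_pow_mul_geometric_of_norm_lt_one i (by rwa [Real.norm_of_nonneg hq0])).of_nonneg_of_le
    (fun _ => by positivity) fun k => mul_le_mul_of_nonneg_left
      (pow_le_pow_of_le_one hq0 hq1.le (Nat.le_self_pow two_ne_zero k)) (by positivity)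

theorem summable_pow_add_sq {q : ℝ} (hq0 : 0 ≤ q) (hq1 : q < 1) (n : ℕ) :
    Summable fun k : ℕ => q ^ ((k + n) ^ 2) :=
  (summable_nat_add_iff (f := fun k => q ^ (k ^ 2)) n).2
    (by simpa using summable_natCast_pow_mul_pow_sq hq0 hq1 0)

theorem tsum_pow_add_sq_le {q : ℝ} (hq0 : 0 ≤ q) (hq1 : q < 1) (n : ℕ) :
    ∑' k : ℕ, q ^ ((k + n) ^ 2) ≤ q ^ (n ^ 2) / (1 - q ^ (2 * n + 1)) := by
  have hr : q ^ (2 * n + 1) < 1 := pow_lt_one₀ hq0 hq1 (by omega)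
  have hgeom := (hasSum_geometric_of_lt_one (by positivity) hr).mul_left (q ^ (n ^ 2))
  refine hasSum_le (fun k => ?_) (summable_pow_add_sq hq0 hq1 n).hasSum hgeom
  rw [← pow_mul, ← pow_add]
  -- `(k + n) ^ 2 ≥ n ^ 2 + (2 * n + 1) * k` because `k ^ 2 ≥ k`
  exact pow_le_pow_of_le_one hq0 hq1.le (by nlinarith [Nat.le_self_pow two_ne_zero k])

theorem tsum_pow_add_two_sq_bounds {q : ℝ} (hq0 : 0 ≤ q) (hq1 : q < 1) :
    q ^ 4 + q ^ 9 + q ^ 16 ≤ ∑' k : ℕ, q ^ ((k + 2) ^ 2) ∧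
      ∑' k : ℕ, q ^ ((k + 2) ^ 2) ≤ q ^ 4 + q ^ 9 / (1 - q ^ 7) := by
  have hsum := summable_pow_add_sq hq0 hq1 2
  constructor
  · simpa [sum_range_succ] using hsum.sum_le_tsum (range 3) fun k _ => by positivity
  · rw [hsum.tsum_eq_zero_add]
    have := tsum_pow_add_sq_le hq0 hq1 3
    norm_num at this ⊢
    linarith

theorem Real.exp_neg_half_sq : Real.exp (-(1 / 2)) ^ 2 = Real.exp (-1) := by
  rw [← Real.exp_nat_mul]; norm_num

theorem Real.exp_neg_half_gt_d7 : 0.6065306 < Real.exp (-(1 / 2)) := by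
  nlinarith [Real.exp_neg_half_sq, Real.exp_neg_one_gt_d9, Real.exp_pos (-(1 / 2))]

theorem Real.exp_neg_half_lt_d7 : Real.exp (-(1 / 2)) < 0.6065307 := by
  nlinarith [Real.exp_neg_half_sq, Real.exp_neg_one_lt_d9, Real.exp_pos (-(1 / 2))]

namespace Karney

variable (q : ℝ)

def firstTerm (k : ℕ) : ℝ := (1 + (k : ℝ) ^ 2) * (1 - q) * q ^ (k ^ 2)

def secondTerm (k : ℕ) : ℝ :=
  q ^ (k + 2) * (1 - q) *
    ∑ j ∈ Icc 1 ((k + 2) * (k + 1)), (((k : ℝ) + 2) + 1 + (j : ℝ)) * q ^ (j - 1) * (1 - q)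

noncomputable def expectedTrials : ℝ := ∑' k, firstTerm q k + ∑' k, secondTerm q k

theorem secondTerm_eq (k : ℕ) :
    secondTerm q k =
      q ^ (k + 2) * (((k : ℝ) + 3) * (1 - q) + 1) - firstTerm q (k + 2) - q ^ ((k + 2) ^ 2) := by
  have hinner := one_sub_sq_mul_sum_Icc_add_mul_pow q ((k : ℝ) + 2 + 1) ((k + 2) * (k + 1))
  have hpow : q ^ ((k + 2) ^ 2) = q ^ (k + 2) * q ^ ((k + 2) * (k + 1)) := by
    rw [← pow_add]; ring_nf
  rw [secondTerm, firstTerm, ← sum_mul, hpow]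
  push_cast at hinner ⊢
  linear_combination q ^ (k + 2) * hinner

theorem hasSum_pow_add_two_mul {q : ℝ} (hq0 : 0 ≤ q) (hq1 : q < 1) :
    HasSum (fun k : ℕ => q ^ (k + 2) * (((k : ℝ) + 3) * (1 - q) + 1))
      ((4 * q ^ 2 - 2 * q ^ 3) / (1 - q)) := by
  have hq : ‖q‖ < 1 := by rwa [Real.norm_of_nonneg hq0]
  have h := ((hasSum_coe_mul_geometric_of_norm_lt_one hq).mul_left ((1 - q) * q ^ 2)).add
    ((hasSum_geometric_of_lt_one hq0 hq1).mul_left ((3 * (1 - q) + 1) * q ^ 2))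
  have hval : (4 * q ^ 2 - 2 * q ^ 3) / (1 - q) =
      (1 - q) * q ^ 2 * (q / (1 - q) ^ 2) + (3 * (1 - q) + 1) * q ^ 2 * (1 - q)⁻¹ := by
    have : 1 - q ≠ 0 := by linarith
    field_simp
    ring
  rw [hval]
  exact h.congr_fun fun k => by ring

theorem expectedTrials_eq {q : ℝ} (hq0 : 0 ≤ q) (hq1 : q < 1) :
    expectedTrials q = (1 + q ^ 2) / (1 - q) - ∑' k : ℕ, q ^ ((k + 2) ^ 2) := by
  have hfirst : Summable (firstTerm q) := by
    refine (((summable_natCast_pow_mul_pow_sq hq0 hq1 0).add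
      (summable_natCast_pow_mul_pow_sq hq0 hq1 2)).mul_left (1 - q)).congr fun k => ?_
    simp only [firstTerm]
    ring
  have hsecond : HasSum (secondTerm q) ((4 * q ^ 2 - 2 * q ^ 3) / (1 - q)
      - ∑' k, firstTerm q (k + 2) - ∑' k : ℕ, q ^ ((k + 2) ^ 2)) := by
    rw [funext (secondTerm_eq q)]
    exact ((hasSum_pow_add_two_mul hq0 hq1).sub
      ((summable_nat_add_iff 2).2 hfirst).hasSum).sub (summable_pow_add_sq hq0 hq1 2).hasSum
  rw [expectedTrials, hsecond.tsum_eq, ← hfirst.sum_add_tsum_nat_add 2]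
  have : 1 - q ≠ 0 := by linarith
  generalize ∑' k, firstTerm q (k + 2) = S
  simp only [sum_range_succ, sum_range_zero, firstTerm]
  field_simp
  ring

theorem expectedTrials_bounds {q : ℝ} (ha : 0.6065306 < q) (hb : q < 0.6065307) :
    3.329 < expectedTrials q ∧ expectedTrials q < 3.330 := by
  have hq0 : 0 ≤ q := by linarith
  have hq1 : q < 1 := by linarith
  obtain ⟨hT₁, hT₂⟩ := tsum_pow_add_two_sq_bounds hq0 hq1
  rw [expectedTrials_eq hq0 hq1]
  constructor
  · calc (3.329 : ℝ) < (1 + 0.6065306 ^ 2) / (1 - 0.6065306) -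
          (0.6065307 ^ 4 + 0.6065307 ^ 9 / (1 - 0.6065307 ^ 7)) := by norm_num
      _ ≤ (1 + q ^ 2) / (1 - q) - (q ^ 4 + q ^ 9 / (1 - q ^ 7)) := by gcongr
      _ ≤ _ := by linarith
  · calc _ ≤ (1 + q ^ 2) / (1 - q) - (q ^ 4 + q ^ 9 + q ^ 16) := by linarith
      _ ≤ (1 + 0.6065307 ^ 2) / (1 - 0.6065307) -
          (0.6065306 ^ 4 + 0.6065306 ^ 9 + 0.6065306 ^ 16) := by gcongr
      _ < 3.330 := by norm_num

end Karney

/-- With `p₁ = e^{−1/2}` and `p₀ = 1 − p₁`, the quantity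
`A = ∑_{k=0}^{∞} (1 + k²) p₀ p₁^{k²}
   + ∑_{k=2}^{∞} p₁^{k} p₀ (∑_{j=1}^{k(k−1)} (k + 1 + j) p₁^{j−1} p₀)`
satisfies `3.329 < A < 3.330`.  (The second series is reindexed by `k ↦ k + 2`.) -/
theorem karney_expected_bernoulli_per_pass :
    let p₁ : ℝ := Real.exp (-(1 / 2 : ℝ))
    let p₀ : ℝ := 1 - p₁
    let A : ℝ :=
      (∑' k : ℕ, (1 + (k : ℝ) ^ 2) * p₀ * p₁ ^ (k ^ 2)) +
        ∑' k : ℕ, p₁ ^ (k + 2) * p₀ *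
          ∑ j ∈ Finset.Icc 1 ((k + 2) * (k + 1)),
            (((k : ℝ) + 2) + 1 + (j : ℝ)) * p₁ ^ (j - 1) * p₀
    3.329 < A ∧ A < 3.330 :=
  Karney.expectedTrials_bounds Real.exp_neg_half_gt_d7 Real.exp_neg_half_lt_d7
end

section
/- Let p₁ = e^{−1/2} and p₀ = 1 − p₁, let A := ∑_{k=0}^{∞} (1 + k²) p₀ p₁^{k²} + ∑_{k=2}^{∞} p₁^{k} p₀ ( ∑_{j=1}^{k(k−1)} (k + 1 + j) p₁^{j−1} p₀ ), and let C := ∑_{k=0}^{∞} p₁^{k²} p₀. Then 4.826 < A / C < 4.827. -/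
/-! Write `x = p₁` and `ψ(m) = xᵐ ((m + 1)(1 - x) + 1)` (`tailWeight`), which is the tail
`∑_{i ≥ m} (i + 2) xⁱ (1 - x)²`. The inner sums of `A` telescope: for `n ≥ 2` the `n`-th term of
the second series is `ψ(n) - ψ(n²)`, and the `k`-th term of the first is `ψ(k²) - x^{k²}`. Summing,
the `ψ(k²)` cancel, so `A = ∑ₘ ψ(m) - θ = 2 / (1 - x) - θ` and `C = (1 - x) θ`, where
`θ = ∑ₖ x^{k²}`. Five terms of `θ` plus a geometric bound on its tail, together with
`e^{-1/2} ≈ 0.60653`, then locate `A / C ≈ 4.82649`. -/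

open Finset

def tailWeight (x : ℝ) (m : ℕ) : ℝ := x ^ m * ((m + 1) * (1 - x) + 1)

lemma tailWeight_sub_tailWeight_succ (x : ℝ) (m : ℕ) :
    tailWeight x m - tailWeight x (m + 1) = ((m : ℝ) + 2) * x ^ m * (1 - x) ^ 2 := by
  unfold tailWeight
  push_cast
  ring

lemma pow_mul_sum_Icc_eq_tailWeight_sub (x : ℝ) (n M : ℕ) :
    x ^ n * (1 - x) * ∑ j ∈ Icc 1 M, ((n : ℝ) + 1 + j) * x ^ (j - 1) * (1 - x) =
      tailWeight x n - tailWeight x (n + M) := by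
  induction M with
  | zero => simp
  | succ M ih =>
    have step := tailWeight_sub_tailWeight_succ x (n + M)
    rw [sum_Icc_succ_top (by omega), mul_add, ih, Nat.add_sub_cancel, ← add_assoc]
    push_cast at step ⊢
    linear_combination -step

section

variable {x : ℝ}

lemma hasSum_tailWeight (hx0 : 0 ≤ x) (hx1 : x < 1) : HasSum (tailWeight x) (2 / (1 - x)) := by
  have hnorm : ‖x‖ < 1 := by rwa [Real.norm_of_nonneg hx0]
  have hsum := ((hasSum_coe_mul_geometric_of_norm_lt_one hnorm).mul_left (1 - x)).add
    ((hasSum_geometric_of_lt_one hx0 hx1).mul_left (2 - x))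
  have hterm : (fun m : ℕ ↦ (1 - x) * (m * x ^ m) + (2 - x) * x ^ m) = tailWeight x := by
    funext m
    unfold tailWeight
    ring
  have hval : (1 - x) * (x / (1 - x) ^ 2) + (2 - x) * (1 - x)⁻¹ = 2 / (1 - x) := by
    field_simp [sub_ne_zero.mpr hx1.ne']
    ring
  rwa [hterm, hval] at hsum

lemma summable_pow_sq (hx0 : 0 ≤ x) (hx1 : x < 1) : Summable fun k : ℕ ↦ x ^ (k ^ 2) :=
  (summable_geometric_of_lt_one hx0 hx1).of_nonneg_of_le (fun _ ↦ pow_nonneg hx0 _) fun k ↦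
    pow_le_pow_of_le_one hx0 hx1.le (Nat.le_self_pow two_ne_zero k)

lemma karney_numerator_eq (hx0 : 0 ≤ x) (hx1 : x < 1) :
    (∑' k : ℕ, (1 + (k : ℝ) ^ 2) * (1 - x) * x ^ (k ^ 2)) +
        ∑' k : ℕ, x ^ (k + 2) * (1 - x) *
          ∑ j ∈ Icc 1 ((k + 2) * (k + 1)), (((k : ℝ) + 2) + 1 + (j : ℝ)) * x ^ (j - 1) * (1 - x)
      = 2 / (1 - x) - ∑' k : ℕ, x ^ (k ^ 2) := by
  have hψ := hasSum_tailWeight hx0 hx1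
  have hθ := summable_pow_sq hx0 hx1
  have hψsq : Summable fun k : ℕ ↦ tailWeight x (k ^ 2) :=
    hψ.summable.comp_injective (Nat.pow_left_injective two_ne_zero)
  have hdiag (k : ℕ) : (1 + (k : ℝ) ^ 2) * (1 - x) * x ^ (k ^ 2) =
      tailWeight x (k ^ 2) - x ^ (k ^ 2) := by
    unfold tailWeight
    push_cast
    ring
  have hoff (k : ℕ) : x ^ (k + 2) * (1 - x) *
      ∑ j ∈ Icc 1 ((k + 2) * (k + 1)), (((k : ℝ) + 2) + 1 + (j : ℝ)) * x ^ (j - 1) * (1 - x) =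
        tailWeight x (k + 2) - tailWeight x ((k + 2) ^ 2) := by
    rw [show (k + 2) ^ 2 = (k + 2) + (k + 2) * (k + 1) by ring,
      ← pow_mul_sum_Icc_eq_tailWeight_sub]
    push_cast
    rfl
  simp_rw [hdiag, hoff]
  rw [hψsq.tsum_sub hθ, ((summable_nat_add_iff 2).mpr hψ.summable).tsum_sub
    ((summable_nat_add_iff 2).mpr hψsq)]
  have hsplit_sq := hψsq.sum_add_tsum_nat_add 2
  have hsplit := hψ.summable.sum_add_tsum_nat_add 2
  rw [hψ.tsum_eq] at hsplit
  norm_num [sum_range_succ] at hsplit_sq hsplit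
  linarith

lemma sum_range_le_tsum_pow_sq (hx0 : 0 ≤ x) (hx1 : x < 1) (n : ℕ) :
    ∑ k ∈ range n, x ^ (k ^ 2) ≤ ∑' k : ℕ, x ^ (k ^ 2) :=
  (summable_pow_sq hx0 hx1).sum_le_tsum _ fun _ _ ↦ pow_nonneg hx0 _

lemma tsum_pow_sq_le (hx0 : 0 ≤ x) (hx1 : x < 1) {n : ℕ} (hn : 0 < n) :
    ∑' k : ℕ, x ^ (k ^ 2) ≤ ∑ k ∈ range n, x ^ (k ^ 2) + x ^ (n ^ 2) / (1 - x ^ (2 * n)) := by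
  have hr0 : 0 ≤ x ^ (2 * n) := pow_nonneg hx0 _
  have hr1 : x ^ (2 * n) < 1 := pow_lt_one₀ hx0 hx1 (by omega)
  have htail (i : ℕ) : x ^ ((i + n) ^ 2) ≤ x ^ (n ^ 2) * (x ^ (2 * n)) ^ i := by
    rw [← pow_mul, ← pow_add]
    exact pow_le_pow_of_le_one hx0 hx1.le (by nlinarith)
  rw [← (summable_pow_sq hx0 hx1).sum_add_tsum_nat_add n]
  refine add_le_add le_rfl ?_
  calc ∑' i : ℕ, x ^ ((i + n) ^ 2)
      ≤ ∑' i : ℕ, x ^ (n ^ 2) * (x ^ (2 * n)) ^ i :=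
        Summable.tsum_le_tsum htail
          ((summable_nat_add_iff (f := fun k : ℕ ↦ x ^ (k ^ 2)) n).mpr (summable_pow_sq hx0 hx1))
          ((summable_geometric_of_lt_one hr0 hr1).mul_left _)
    _ = x ^ (n ^ 2) / (1 - x ^ (2 * n)) := by
        rw [tsum_mul_left, tsum_geometric_of_lt_one hr0 hr1, div_eq_mul_inv]

lemma tsum_pow_sq_mem_Icc (hl : 0.60653 ≤ x) (hu : x ≤ 0.60654) :
    ∑' k : ℕ, x ^ (k ^ 2) ∈ Set.Icc 1.753309 1.753334 := by
  have hx0 : 0 ≤ x := by linarith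
  have hx1 : x < 1 := by linarith
  have hlo := sum_range_le_tsum_pow_sq hx0 hx1 5
  have hhi := tsum_pow_sq_le hx0 hx1 (n := 5) (by norm_num)
  norm_num [sum_range_succ] at hlo hhi
  constructor
  · have : 1 + 0.60653 + 0.60653 ^ 4 + 0.60653 ^ 9 + 0.60653 ^ 16 ≤
        1 + x + x ^ 4 + x ^ 9 + x ^ 16 := by gcongr
    norm_num at this
    linarith
  · have : 1 + x + x ^ 4 + x ^ 9 + x ^ 16 + x ^ 25 / (1 - x ^ 10) ≤
        1 + 0.60654 + 0.60654 ^ 4 + 0.60654 ^ 9 + 0.60654 ^ 16 +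
          0.60654 ^ 25 / (1 - 0.60654 ^ 10) := by
      have : 0 < 1 - x ^ 10 := by nlinarith [pow_lt_one₀ hx0 hx1 (n := 10) (by norm_num)]
      gcongr
    norm_num at this
    linarith

lemma karney_ratio_mem_Ioo (hl : 0.60653 ≤ x) (hu : x ≤ 0.60654) {θ : ℝ} (hθl : 1.753309 ≤ θ)
    (hθu : θ ≤ 1.753334) :
    (2 / (1 - x) - θ) / (θ * (1 - x)) ∈ Set.Ioo 4.826 4.827 := by
  have hu0 : 0 < 1 - x := by linarith
  have hθ0 : 0 < θ := by linarith
  rw [div_sub' hu0.ne', div_div, Set.mem_Ioo, lt_div_iff₀ (by positivity),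
    div_lt_iff₀ (by positivity)]
  constructor <;>
    nlinarith [mul_le_mul_of_nonneg_left hθu hu0.le, mul_le_mul_of_nonneg_left hθl hu0.le]

end

lemma exp_neg_half_mem_Icc : Real.exp (-(1 / 2)) ∈ Set.Icc 0.60653 0.60654 := by
  have hpos := Real.exp_pos (-(1 / 2))
  have hsq : Real.exp (-(1 / 2)) ^ 2 = Real.exp (-1) := by
    rw [← Real.exp_nat_mul]
    norm_num
  have hlo := Real.exp_neg_one_gt_d9
  have hhi := Real.exp_neg_one_lt_d9
  constructor <;> nlinarith

/-- Proposition 2: with `p₁ = e^{−1/2}`, `p₀ = 1 − p₁`,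
`A = ∑_{k=0}^{∞} (1 + k²) p₀ p₁^{k²}
   + ∑_{k=2}^{∞} p₁^{k} p₀ (∑_{j=1}^{k(k−1)} (k + 1 + j) p₁^{j−1} p₀)`
(the second series reindexed by `k ↦ k + 2`) and `C = ∑_{k=0}^{∞} p₁^{k²} p₀`,
we have `4.826 < A / C < 4.827`. -/
theorem karney_expected_bernoulli_total :
    let p₁ : ℝ := Real.exp (-(1 / 2 : ℝ))
    let p₀ : ℝ := 1 - p₁
    let A : ℝ :=
      (∑' k : ℕ, (1 + (k : ℝ) ^ 2) * p₀ * p₁ ^ (k ^ 2)) +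
        ∑' k : ℕ, p₁ ^ (k + 2) * p₀ *
          ∑ j ∈ Finset.Icc 1 ((k + 2) * (k + 1)),
            (((k : ℝ) + 2) + 1 + (j : ℝ)) * p₁ ^ (j - 1) * p₀
    let C : ℝ := ∑' k : ℕ, p₁ ^ (k ^ 2) * p₀
    4.826 < A / C ∧ A / C < 4.827 := by
  intro p₁ p₀ A C
  obtain ⟨hl, hu⟩ := exp_neg_half_mem_Icc
  obtain ⟨hθl, hθu⟩ := tsum_pow_sq_mem_Icc hl hu
  have hA : A = 2 / (1 - p₁) - ∑' k : ℕ, p₁ ^ (k ^ 2) :=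
    karney_numerator_eq (by linarith) (by linarith)
  have hC : C = (∑' k : ℕ, p₁ ^ (k ^ 2)) * (1 - p₁) := tsum_mul_right
  rw [hA, hC]
  exact karney_ratio_mem_Ioo hl hu hθl hθu
end

section
/- Let p₁ = e^{−1/2} and p₀ = 1 − p₁. Then the quantity B := ∑_{k=0}^{∞} (1 + k²) p₁^{k²} p₀ + ∑_{k=2}^{∞} p₁^{(k−1)² + 1} ( ∑_{j=1}^{2(k−1)} (1 + (k−1)² + j) p₁^{j−1} p₀ ) satisfies 2.541 < B < 2.542. -/
/-!
The `k`-th terms of the two series are at most `(m+1)² p₁^{m²}` with `m = k` and `m = k + 1`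
(for the second, because the weights `p₁^{j−1} p₀` sum to less than `1`), and for `m ≥ 6` this is at
most `ρ^m` with `ρ = 4 · 0.60654⁶ ≈ 0.2`. Truncating the series after six and five terms thus leaves
tails below `2·10⁻⁴`. The heads are finite sums, bounded by interval arithmetic from
`0.60653 < p₁ < 0.60654`, which follows from `p₁² = e⁻¹` and the nine-digit bounds on `e`.
-/

open Finset

namespace BernoulliPass

/-- The powers of `p₁` are taken at `q` and the factor `p₀` at `1 - r`, so that the terms are
monotone in `(q, r)` and can be bracketed by replacing `p₁` with the ends of an interval. -/
def outputTerm (q r : ℝ) (k : ℕ) : ℝ :=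
  (1 + (k : ℝ) ^ 2) * q ^ (k ^ 2) * (1 - r)

def rejectSum (q r : ℝ) (k : ℕ) : ℝ :=
  ∑ j ∈ Icc 1 (2 * (k + 1)), (1 + ((k : ℝ) + 1) ^ 2 + (j : ℝ)) * q ^ (j - 1) * (1 - r)

def rejectTerm (q r : ℝ) (k : ℕ) : ℝ :=
  q ^ ((k + 1) ^ 2 + 1) * rejectSum q r k

def envelope (p : ℝ) (m : ℕ) : ℝ :=
  ((m : ℝ) + 1) ^ 2 * p ^ (m ^ 2)

lemma rejectSum_eq_sum_range (q r : ℝ) (k : ℕ) :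
    rejectSum q r k =
      ∑ i ∈ range (2 * (k + 1)), (2 + ((k : ℝ) + 1) ^ 2 + i) * q ^ i * (1 - r) := by
  rw [rejectSum, ← Ico_add_one_right_eq_Icc, sum_Ico_eq_sum_range]
  refine sum_congr rfl fun i _ => ?_
  simp only [Nat.add_sub_cancel_left, Nat.cast_add, Nat.cast_one]
  ring

section Monotone

variable {q q' r r' : ℝ}

lemma mul_pow_mul_one_sub_le {c : ℝ} (hc : 0 ≤ c) (hq : 0 ≤ q) (hqq' : q ≤ q') (hr : r ≤ 1)
    (hrr' : r' ≤ r) (n : ℕ) : c * q ^ n * (1 - r) ≤ c * q' ^ n * (1 - r') := by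
  have : 0 ≤ 1 - r := by linarith
  have : 0 ≤ q' := hq.trans hqq'
  gcongr

variable (hq : 0 ≤ q) (hqq' : q ≤ q') (hr : r ≤ 1) (hrr' : r' ≤ r)
include hq hqq' hr hrr'

lemma outputTerm_mono (k : ℕ) : outputTerm q r k ≤ outputTerm q' r' k :=
  mul_pow_mul_one_sub_le (by positivity) hq hqq' hr hrr' _

lemma rejectSum_mono (k : ℕ) : rejectSum q r k ≤ rejectSum q' r' k :=
  sum_le_sum fun _ _ => mul_pow_mul_one_sub_le (by positivity) hq hqq' hr hrr' _

lemma rejectTerm_mono (k : ℕ) : rejectTerm q r k ≤ rejectTerm q' r' k :=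
  mul_le_mul (pow_le_pow_left₀ hq hqq' _) (rejectSum_mono hq hqq' hr hrr' k)
    (sum_nonneg fun _ _ => mul_nonneg (by positivity) (by linarith)) (pow_nonneg (hq.trans hqq') _)

end Monotone

section Envelope

variable {p : ℝ} (hp0 : 0 ≤ p)
include hp0

lemma outputTerm_le_envelope (k : ℕ) : outputTerm p p k ≤ envelope p k := by
  have hk : 1 + (k : ℝ) ^ 2 ≤ ((k : ℝ) + 1) ^ 2 := by nlinarith [k.cast_nonneg (α := ℝ)]
  calc outputTerm p p k ≤ (1 + (k : ℝ) ^ 2) * p ^ (k ^ 2) * 1 := by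
        unfold outputTerm; gcongr; linarith
    _ ≤ envelope p k := by rw [envelope, mul_one]; gcongr

variable (hp1 : p ≤ 1)
include hp1

lemma rejectSum_le (k : ℕ) : rejectSum p p k ≤ ((k : ℝ) + 2) ^ 2 := by
  rw [rejectSum_eq_sum_range]
  calc ∑ i ∈ range (2 * (k + 1)), (2 + ((k : ℝ) + 1) ^ 2 + i) * p ^ i * (1 - p)
      ≤ ∑ i ∈ range (2 * (k + 1)), ((k : ℝ) + 2) ^ 2 * p ^ i * (1 - p) := by
        refine sum_le_sum fun i hi => ?_
        have hi : (i : ℝ) + 1 ≤ 2 * ((k : ℝ) + 1) := by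
          exact_mod_cast Nat.succ_le_of_lt (mem_range.mp hi)
        have : 0 ≤ 1 - p := by linarith
        gcongr
        linarith
    _ = ((k : ℝ) + 2) ^ 2 * (1 - p ^ (2 * (k + 1))) := by
        rw [← mul_neg_geom_sum, mul_sum, mul_sum]
        exact sum_congr rfl fun i _ => by ring
    _ ≤ ((k : ℝ) + 2) ^ 2 :=
        mul_le_of_le_one_right (sq_nonneg _) (sub_le_self _ (pow_nonneg hp0 _))

lemma rejectTerm_le_envelope (k : ℕ) : rejectTerm p p k ≤ envelope p (k + 1) := by
  calc rejectTerm p p k ≤ p ^ ((k + 1) ^ 2) * ((k : ℝ) + 2) ^ 2 :=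
        mul_le_mul (pow_le_pow_of_le_one hp0 hp1 (Nat.le_succ _)) (rejectSum_le hp0 hp1 k)
          (sum_nonneg fun _ _ => mul_nonneg (by positivity) (by linarith)) (pow_nonneg hp0 _)
    _ = envelope p (k + 1) := by rw [envelope]; push_cast; ring

end Envelope

lemma envelope_le_geometric {p b : ℝ} (hp0 : 0 ≤ p) (hpb : p ≤ b) (hb1 : b ≤ 1) {N m : ℕ}
    (hNm : N ≤ m) : envelope p m ≤ (4 * b ^ N) ^ m := by
  have hm : (m : ℝ) + 1 ≤ 2 ^ m := by exact_mod_cast Nat.lt_two_pow_self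
  have hb0 : 0 ≤ b := hp0.trans hpb
  calc envelope p m ≤ (2 ^ m) ^ 2 * b ^ (N * m) := by
        unfold envelope
        gcongr
        calc p ^ (m ^ 2) ≤ b ^ (m ^ 2) := pow_le_pow_left₀ hp0 hpb _
          _ ≤ b ^ (N * m) := pow_le_pow_of_le_one hb0 hb1 (by rw [sq]; gcongr)
    _ = (4 * b ^ N) ^ m := by
        rw [mul_pow, ← pow_mul, ← pow_mul, mul_comm m 2, pow_mul]
        norm_num

section GeometricTail

variable {f : ℕ → ℝ} {C ρ : ℝ} {N : ℕ} (hf : ∀ k, 0 ≤ f k) (hρ0 : 0 ≤ ρ) (hρ1 : ρ < 1)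
  (htail : ∀ i, f (i + N) ≤ C * ρ ^ i)
include hf hρ0 hρ1 htail

lemma summable_of_le_geometric_tail : Summable f :=
  (summable_nat_add_iff N).mp <| Summable.of_nonneg_of_le (fun _ => hf _) htail
    ((summable_geometric_of_lt_one hρ0 hρ1).mul_left C)

lemma tsum_le_of_le_geometric_tail : ∑' k, f k ≤ ∑ k ∈ range N, f k + C / (1 - ρ) := by
  have hsum := summable_of_le_geometric_tail hf hρ0 hρ1 htail
  rw [← hsum.sum_add_tsum_nat_add N]
  gcongr
  calc ∑' i, f (i + N) ≤ ∑' i, C * ρ ^ i :=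
        Summable.tsum_le_tsum htail ((summable_nat_add_iff N).mpr hsum)
          ((summable_geometric_of_lt_one hρ0 hρ1).mul_left C)
    _ = C / (1 - ρ) := by rw [tsum_mul_left, tsum_geometric_of_lt_one hρ0 hρ1, div_eq_mul_inv]

end GeometricTail

section Bracket

variable {a b p : ℝ} (ha0 : 0 ≤ a) (hap : a ≤ p) (hpb : p ≤ b) (hb1 : b ≤ 1) (N : ℕ)
include ha0 hap hpb hb1

lemma tsum_outputTerm_bounds (hρ : 4 * b ^ N < 1) :
    ∑ k ∈ range N, outputTerm a b k ≤ ∑' k, outputTerm p p k ∧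
      ∑' k, outputTerm p p k ≤
        ∑ k ∈ range N, outputTerm b a k + (4 * b ^ N) ^ N / (1 - 4 * b ^ N) := by
  have hp0 : 0 ≤ p := ha0.trans hap
  have hp1 : p ≤ 1 := hpb.trans hb1
  have hb0 : 0 ≤ b := hp0.trans hpb
  have hnonneg : ∀ k, 0 ≤ outputTerm p p k := fun k =>
    mul_nonneg (by positivity) (by linarith)
  have hρ0 : 0 ≤ 4 * b ^ N := by positivity
  have htail : ∀ i, outputTerm p p (i + N) ≤ (4 * b ^ N) ^ N * (4 * b ^ N) ^ i := fun i =>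
    (outputTerm_le_envelope hp0 _).trans <|
      (envelope_le_geometric hp0 hpb hb1 (N.le_add_left i)).trans_eq (by ring)
  constructor
  · calc ∑ k ∈ range N, outputTerm a b k ≤ ∑ k ∈ range N, outputTerm p p k :=
          sum_le_sum fun k _ => outputTerm_mono ha0 hap hb1 hpb k
      _ ≤ ∑' k, outputTerm p p k :=
          (summable_of_le_geometric_tail hnonneg hρ0 hρ htail).sum_le_tsum _ fun k _ => hnonneg k
  · refine (tsum_le_of_le_geometric_tail hnonneg hρ0 hρ htail).trans ?_
    gcongr with k
    exact outputTerm_mono hp0 hpb hp1 hap k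

lemma tsum_rejectTerm_bounds (hρ : 4 * b ^ (N + 1) < 1) :
    ∑ k ∈ range N, rejectTerm a b k ≤ ∑' k, rejectTerm p p k ∧
      ∑' k, rejectTerm p p k ≤
        ∑ k ∈ range N, rejectTerm b a k +
          (4 * b ^ (N + 1)) ^ (N + 1) / (1 - 4 * b ^ (N + 1)) := by
  have hp0 : 0 ≤ p := ha0.trans hap
  have hp1 : p ≤ 1 := hpb.trans hb1
  have hb0 : 0 ≤ b := hp0.trans hpb
  have hnonneg : ∀ k, 0 ≤ rejectTerm p p k := fun k =>
    mul_nonneg (pow_nonneg hp0 _) (sum_nonneg fun _ _ => mul_nonneg (by positivity) (by linarith))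
  have hρ0 : 0 ≤ 4 * b ^ (N + 1) := by positivity
  have htail : ∀ i, rejectTerm p p (i + N) ≤
      (4 * b ^ (N + 1)) ^ (N + 1) * (4 * b ^ (N + 1)) ^ i := fun i =>
    (rejectTerm_le_envelope hp0 hp1 _).trans <|
      (envelope_le_geometric hp0 hpb hb1 (by omega : N + 1 ≤ i + N + 1)).trans_eq (by ring)
  constructor
  · calc ∑ k ∈ range N, rejectTerm a b k ≤ ∑ k ∈ range N, rejectTerm p p k :=
          sum_le_sum fun k _ => rejectTerm_mono ha0 hap hb1 hpb k
      _ ≤ ∑' k, rejectTerm p p k :=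
          (summable_of_le_geometric_tail hnonneg hρ0 hρ htail).sum_le_tsum _ fun k _ => hnonneg k
  · refine (tsum_le_of_le_geometric_tail hnonneg hρ0 hρ htail).trans ?_
    gcongr with k
    exact rejectTerm_mono hp0 hpb hp1 hap k

end Bracket

lemma exp_neg_half_sq : Real.exp (-(1 / 2)) ^ 2 = (Real.exp 1)⁻¹ := by
  rw [sq, ← Real.exp_add, ← Real.exp_neg]
  norm_num

lemma lt_exp_neg_half : (0.60653 : ℝ) < Real.exp (-(1 / 2)) := by
  refine lt_of_pow_lt_pow_left₀ 2 (Real.exp_pos _).le ?_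
  rw [exp_neg_half_sq]
  calc (0.60653 : ℝ) ^ 2 < (2.7182818286 : ℝ)⁻¹ := by norm_num
    _ < (Real.exp 1)⁻¹ := (inv_lt_inv₀ (by norm_num) (Real.exp_pos 1)).mpr Real.exp_one_lt_d9

lemma exp_neg_half_lt : Real.exp (-(1 / 2)) < 0.60654 := by
  refine lt_of_pow_lt_pow_left₀ 2 (by norm_num) ?_
  rw [exp_neg_half_sq]
  calc (Real.exp 1)⁻¹ < (2.7182818283 : ℝ)⁻¹ :=
        (inv_lt_inv₀ (Real.exp_pos 1) (by norm_num)).mpr Real.exp_one_gt_d9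
    _ < 0.60654 ^ 2 := by norm_num

lemma lt_sum_heads :
    (2.541 : ℝ) < ∑ k ∈ range 6, outputTerm 0.60653 0.60654 k +
      ∑ k ∈ range 5, rejectTerm 0.60653 0.60654 k := by
  simp only [outputTerm, rejectTerm, rejectSum_eq_sum_range, sum_range_succ, sum_range_zero]
  norm_num

lemma sum_heads_add_tails_lt :
    ∑ k ∈ range 6, outputTerm 0.60654 0.60653 k + ∑ k ∈ range 5, rejectTerm 0.60654 0.60653 k +
      2 * ((4 * 0.60654 ^ 6) ^ 6 / (1 - 4 * 0.60654 ^ 6)) < (2.542 : ℝ) := by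
  simp only [outputTerm, rejectTerm, rejectSum_eq_sum_range, sum_range_succ, sum_range_zero]
  norm_num

end BernoulliPass

/-- With `p₁ = e^{−1/2}` and `p₀ = 1 − p₁`, the quantity
`B = ∑_{k=0}^{∞} (1 + k²) p₁^{k²} p₀
   + ∑_{k=2}^{∞} p₁^{(k−1)² + 1} (∑_{j=1}^{2(k−1)} (1 + (k−1)² + j) p₁^{j−1} p₀)`
satisfies `2.541 < B < 2.542`.  (The second series is reindexed by `k ↦ k + 2`.) -/
theorem improved_expected_bernoulli_per_pass :
    let p₁ : ℝ := Real.exp (-(1 / 2 : ℝ))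
    let p₀ : ℝ := 1 - p₁
    let B : ℝ :=
      (∑' k : ℕ, (1 + (k : ℝ) ^ 2) * p₁ ^ (k ^ 2) * p₀) +
        ∑' k : ℕ, p₁ ^ ((k + 1) ^ 2 + 1) *
          ∑ j ∈ Finset.Icc 1 (2 * (k + 1)),
            (1 + ((k : ℝ) + 1) ^ 2 + (j : ℝ)) * p₁ ^ (j - 1) * p₀
    2.541 < B ∧ B < 2.542 := by
  intro p₁ p₀ B
  change 2.541 < (∑' k, BernoulliPass.outputTerm p₁ p₁ k) + ∑' k, BernoulliPass.rejectTerm p₁ p₁ k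
    ∧ (∑' k, BernoulliPass.outputTerm p₁ p₁ k) + ∑' k, BernoulliPass.rejectTerm p₁ p₁ k < 2.542
  have ha : (0.60653 : ℝ) ≤ p₁ := BernoulliPass.lt_exp_neg_half.le
  have hb : p₁ ≤ 0.60654 := BernoulliPass.exp_neg_half_lt.le
  have hρ : 4 * (0.60654 : ℝ) ^ 6 < 1 := by norm_num
  obtain ⟨hout_lo, hout_hi⟩ :=
    BernoulliPass.tsum_outputTerm_bounds (by norm_num) ha hb (by norm_num) 6 hρ
  obtain ⟨hrej_lo, hrej_hi⟩ :=
    BernoulliPass.tsum_rejectTerm_bounds (by norm_num) ha hb (by norm_num) 5 hρ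
  constructor
  · linarith [BernoulliPass.lt_sum_heads]
  · linarith [BernoulliPass.sum_heads_add_tails_lt]
end

section
/- Let p₁ = e^{−1/2} and p₀ = 1 − p₁, let B := ∑_{k=0}^{∞} (1 + k²) p₁^{k²} p₀ + ∑_{k=2}^{∞} p₁^{(k−1)² + 1} ( ∑_{j=1}^{2(k−1)} (1 + (k−1)² + j) p₁^{j−1} p₀ ), and let C := ∑_{k=0}^{∞} p₁^{k²} p₀. Then 3.683 < B / C < 3.685. -/
/-!
After cancelling the common factor `p₀`, `B / C` is a ratio of power series in `q = p₁ = e^{-1/2}`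
with nonnegative coefficients. Each series is therefore increasing in `q`, and its `k`-th term is
dominated by `2 (k + 2)³ q^{k²} ≤ 16 (8 qⁿ)^k` for `k ≥ n`, so the tail after `n` terms is
geometrically small. The first `n` terms are evaluated at the rational endpoints of an enclosure of
`q`, which comes from the nine-digit bounds on `e` via `q² e = 1`. Eight terms and
`0.60653 < q < 0.606531` already pin `B / C` between `3.68396` and `3.68401`.
-/

open Finset

/- With `q = p₁`, the terms of `C / p₀`, of the first series of `B / p₀` (accepting passes) and of
its second series (rejected passes). -/
def acceptWeight (q : ℝ) (k : ℕ) : ℝ := q ^ (k ^ 2)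

def acceptCost (q : ℝ) (k : ℕ) : ℝ := (1 + (k : ℝ) ^ 2) * q ^ (k ^ 2)

def rejectCost (q : ℝ) (k : ℕ) : ℝ :=
  q ^ ((k + 1) ^ 2 + 1) * ∑ j ∈ Icc 1 (2 * (k + 1)), (1 + ((k : ℝ) + 1) ^ 2 + (j : ℝ)) * q ^ (j - 1)

noncomputable def squareTailBound (q : ℝ) (n : ℕ) : ℝ := 16 * (8 * q ^ n) ^ n / (1 - 8 * q ^ n)

theorem tsum_le_sum_range_add_of_le_geometric {f : ℕ → ℝ} (n : ℕ) {A r : ℝ} (hr₀ : 0 ≤ r)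
    (hr₁ : r < 1) (hf : ∀ k, 0 ≤ f k) (htail : ∀ k, f (k + n) ≤ A * r ^ k) :
    Summable f ∧ ∑' k, f k ≤ ∑ k ∈ range n, f k + A / (1 - r) := by
  have hgeom : Summable fun k ↦ A * r ^ k := (summable_geometric_of_lt_one hr₀ hr₁).mul_left A
  have htail_summable : Summable fun k ↦ f (k + n) :=
    hgeom.of_nonneg_of_le (fun k ↦ hf _) htail
  have hsummable : Summable f := (summable_nat_add_iff n).mp htail_summable
  refine ⟨hsummable, ?_⟩
  rw [← hsummable.sum_add_tsum_nat_add n]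
  gcongr
  calc ∑' k, f (k + n) ≤ ∑' k, A * r ^ k := htail_summable.tsum_le_tsum htail hgeom
    _ = A / (1 - r) := by rw [tsum_mul_left, tsum_geometric_of_lt_one hr₀ hr₁, div_eq_mul_inv]

theorem cube_mul_pow_sq_le {q : ℝ} (hq₀ : 0 ≤ q) (hq₁ : q ≤ 1) {n k : ℕ} (hnk : n ≤ k) :
    ((k : ℝ) + 2) ^ 3 * q ^ (k ^ 2) ≤ 8 * (8 * q ^ n) ^ k := by
  have hlin : (k : ℝ) + 2 ≤ 2 ^ (k + 1) := by
    exact_mod_cast Nat.lt_two_pow_self (n := k + 1)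
  have hpow : q ^ (k ^ 2) ≤ (q ^ n) ^ k := by
    rw [← pow_mul]
    exact pow_le_pow_of_le_one hq₀ hq₁ (by nlinarith)
  calc ((k : ℝ) + 2) ^ 3 * q ^ (k ^ 2) ≤ (2 ^ (k + 1)) ^ 3 * (q ^ n) ^ k := by gcongr
    _ = 8 * (8 * q ^ n) ^ k := by
      rw [← pow_mul, show (k + 1) * 3 = 3 * k + 3 by ring, pow_add, pow_mul]; ring

theorem tsum_mem_Icc_of_monotoneOn_of_le {t : ℝ → ℕ → ℝ}
    (hnonneg : ∀ q, 0 ≤ q → ∀ k, 0 ≤ t q k)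
    (hmono : ∀ k, MonotoneOn (t · k) (Set.Ici 0))
    (hdom : ∀ q, 0 ≤ q → q ≤ 1 → ∀ k, t q k ≤ 2 * ((k : ℝ) + 2) ^ 3 * q ^ (k ^ 2))
    {lo q hi : ℝ} (n : ℕ) (hlo : 0 ≤ lo) (hlo_q : lo ≤ q) (hq_hi : q ≤ hi)
    (hhi : 8 * hi ^ n < 1) :
    ∑' k, t q k ∈
      Set.Icc (∑ k ∈ range n, t lo k) (∑ k ∈ range n, t hi k + squareTailBound hi n) := by
  have hq : 0 ≤ q := hlo.trans hlo_q
  have hhi₀ : 0 ≤ hi := hq.trans hq_hi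
  have hhi₁ : hi ≤ 1 := by
    by_contra! h
    linarith [one_le_pow₀ (n := n) h.le]
  have hq₁ : q ≤ 1 := hq_hi.trans hhi₁
  have hmono' : ∀ {a b} k, 0 ≤ a → a ≤ b → t a k ≤ t b k := fun k ha hab ↦
    hmono k ha (ha.trans hab : (0 : ℝ) ≤ _) hab
  obtain ⟨hsummable, hupper⟩ := tsum_le_sum_range_add_of_le_geometric (f := t q) n
    (A := 16 * (8 * hi ^ n) ^ n) (by positivity) hhi (hnonneg q hq) fun k ↦ by
      calc t q (k + n) ≤ 2 * (((k + n : ℕ) : ℝ) + 2) ^ 3 * q ^ ((k + n) ^ 2) := hdom q hq hq₁ _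
        _ ≤ 2 * (8 * (8 * q ^ n) ^ (k + n)) := by
          rw [mul_assoc]
          exact mul_le_mul_of_nonneg_left
            (cube_mul_pow_sq_le hq hq₁ (Nat.le_add_left n k)) two_pos.le
        _ ≤ 2 * (8 * (8 * hi ^ n) ^ (k + n)) := by gcongr
        _ = 16 * (8 * hi ^ n) ^ n * (8 * hi ^ n) ^ k := by ring
  refine ⟨?_, hupper.trans ?_⟩
  · calc ∑ k ∈ range n, t lo k ≤ ∑ k ∈ range n, t q k :=
          sum_le_sum fun k _ ↦ hmono' k hlo hlo_q
      _ ≤ ∑' k, t q k := hsummable.sum_le_tsum _ fun k _ ↦ hnonneg q hq k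
  · unfold squareTailBound
    gcongr with k
    exact hmono' k hq hq_hi

theorem acceptWeight_nonneg {q : ℝ} (hq : 0 ≤ q) (k : ℕ) : 0 ≤ acceptWeight q k :=
  pow_nonneg hq _

theorem acceptCost_nonneg {q : ℝ} (hq : 0 ≤ q) (k : ℕ) : 0 ≤ acceptCost q k := by
  unfold acceptCost; positivity

theorem rejectCost_nonneg {q : ℝ} (hq : 0 ≤ q) (k : ℕ) : 0 ≤ rejectCost q k := by
  unfold rejectCost; positivity

theorem monotoneOn_acceptWeight (k : ℕ) : MonotoneOn (acceptWeight · k) (Set.Ici 0) :=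
  fun _ ha _ _ hab ↦ pow_le_pow_left₀ ha hab _

theorem monotoneOn_acceptCost (k : ℕ) : MonotoneOn (acceptCost · k) (Set.Ici 0) :=
  fun _ ha _ _ hab ↦ by dsimp only [acceptCost]; gcongr

theorem monotoneOn_rejectCost (k : ℕ) : MonotoneOn (rejectCost · k) (Set.Ici 0) :=
  fun a ha _ _ hab ↦ by
    have ha : 0 ≤ a := ha
    dsimp only [rejectCost]
    gcongr
    exact pow_nonneg (ha.trans hab) _

theorem acceptWeight_le {q : ℝ} (hq : 0 ≤ q) (k : ℕ) :
    acceptWeight q k ≤ 2 * ((k : ℝ) + 2) ^ 3 * q ^ (k ^ 2) :=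
  le_mul_of_one_le_left (pow_nonneg hq _) <| by
    nlinarith [one_le_pow₀ (by linarith [k.cast_nonneg (α := ℝ)] : (1 : ℝ) ≤ k + 2) (n := 3)]

theorem acceptCost_le {q : ℝ} (hq : 0 ≤ q) (k : ℕ) :
    acceptCost q k ≤ 2 * ((k : ℝ) + 2) ^ 3 * q ^ (k ^ 2) := by
  unfold acceptCost
  gcongr
  nlinarith [k.cast_nonneg (α := ℝ)]

theorem rejectCost_le {q : ℝ} (hq₀ : 0 ≤ q) (hq₁ : q ≤ 1) (k : ℕ) :
    rejectCost q k ≤ 2 * ((k : ℝ) + 2) ^ 3 * q ^ (k ^ 2) := by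
  have hterm : ∀ j ∈ Icc 1 (2 * (k + 1)),
      (1 + ((k : ℝ) + 1) ^ 2 + (j : ℝ)) * q ^ (j - 1) ≤ ((k : ℝ) + 2) ^ 2 := by
    intro j hj
    have hj : (j : ℝ) ≤ 2 * ((k : ℝ) + 1) := by exact_mod_cast (mem_Icc.mp hj).2
    calc (1 + ((k : ℝ) + 1) ^ 2 + (j : ℝ)) * q ^ (j - 1) ≤ ((k : ℝ) + 2) ^ 2 * 1 := by
          gcongr
          · linarith
          · exact pow_le_one₀ hq₀ hq₁
      _ = ((k : ℝ) + 2) ^ 2 := mul_one _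
  have hsum : ∑ j ∈ Icc 1 (2 * (k + 1)), (1 + ((k : ℝ) + 1) ^ 2 + (j : ℝ)) * q ^ (j - 1) ≤
      2 * ((k : ℝ) + 2) ^ 3 := by
    calc _ ≤ #(Icc 1 (2 * (k + 1))) • ((k : ℝ) + 2) ^ 2 := sum_le_card_nsmul _ _ _ hterm
      _ = 2 * ((k : ℝ) + 1) * ((k : ℝ) + 2) ^ 2 := by
        rw [Nat.card_Icc, nsmul_eq_mul]; push_cast; ring
      _ ≤ 2 * ((k : ℝ) + 2) ^ 3 := by nlinarith [k.cast_nonneg (α := ℝ)]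
  have hpow : q ^ ((k + 1) ^ 2 + 1) ≤ q ^ (k ^ 2) :=
    pow_le_pow_of_le_one hq₀ hq₁ (by nlinarith [Nat.zero_le k])
  unfold rejectCost
  calc _ ≤ q ^ (k ^ 2) * (2 * ((k : ℝ) + 2) ^ 3) := by gcongr
    _ = _ := by ring

theorem exp_neg_half_mem_Ioo : Real.exp (-(1 / 2)) ∈ Set.Ioo 0.60653 0.606531 := by
  set q := Real.exp (-(1 / 2))
  have hq : 0 < q := Real.exp_pos _
  have hsq : q ^ 2 * Real.exp 1 = 1 := by
    rw [sq, ← Real.exp_add, ← Real.exp_add]; norm_num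
  constructor
  · refine lt_of_pow_lt_pow_left₀ 2 hq.le ?_
    nlinarith [Real.exp_one_lt_d9]
  · refine lt_of_pow_lt_pow_left₀ 2 (by norm_num) ?_
    nlinarith [Real.exp_one_gt_d9]

theorem truncated_ratio_gt :
    3.683 * (∑ k ∈ range 8, acceptWeight 0.606531 k + squareTailBound 0.606531 8) <
      ∑ k ∈ range 8, acceptCost 0.60653 k + ∑ k ∈ range 8, rejectCost 0.60653 k := by
  norm_num [acceptWeight, acceptCost, rejectCost, squareTailBound, sum_range_succ,
    sum_Icc_succ_top]

theorem truncated_ratio_lt :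
    ∑ k ∈ range 8, acceptCost 0.606531 k + squareTailBound 0.606531 8 +
        (∑ k ∈ range 8, rejectCost 0.606531 k + squareTailBound 0.606531 8) <
      3.685 * ∑ k ∈ range 8, acceptWeight 0.60653 k := by
  norm_num [acceptWeight, acceptCost, rejectCost, squareTailBound, sum_range_succ,
    sum_Icc_succ_top]

/-- Proposition 3: with `p₁ = e^{−1/2}`, `p₀ = 1 − p₁`,
`B = ∑_{k=0}^{∞} (1 + k²) p₁^{k²} p₀
   + ∑_{k=2}^{∞} p₁^{(k−1)² + 1} (∑_{j=1}^{2(k−1)} (1 + (k−1)² + j) p₁^{j−1} p₀)`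
(the second series reindexed by `k ↦ k + 2`) and `C = ∑_{k=0}^{∞} p₁^{k²} p₀`,
we have `3.683 < B / C < 3.685`. -/
theorem improved_expected_bernoulli_total :
    let p₁ : ℝ := Real.exp (-(1 / 2 : ℝ))
    let p₀ : ℝ := 1 - p₁
    let B : ℝ :=
      (∑' k : ℕ, (1 + (k : ℝ) ^ 2) * p₁ ^ (k ^ 2) * p₀) +
        ∑' k : ℕ, p₁ ^ ((k + 1) ^ 2 + 1) *
          ∑ j ∈ Finset.Icc 1 (2 * (k + 1)),
            (1 + ((k : ℝ) + 1) ^ 2 + (j : ℝ)) * p₁ ^ (j - 1) * p₀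
    let C : ℝ := ∑' k : ℕ, p₁ ^ (k ^ 2) * p₀
    3.683 < B / C ∧ B / C < 3.685 := by
  intro p₁ p₀ B C
  obtain ⟨hlo, hhi⟩ := exp_neg_half_mem_Ioo
  have hp₀ : 0 < p₀ := sub_pos.mpr (hhi.trans (by norm_num))
  have hB : B = (∑' k, acceptCost p₁ k + ∑' k, rejectCost p₁ k) * p₀ := by
    simp only [B, acceptCost, rejectCost, add_mul, ← tsum_mul_right, sum_mul, mul_assoc]
  have hC : C = (∑' k, acceptWeight p₁ k) * p₀ := tsum_mul_right
  have h8 : 8 * (0.606531 : ℝ) ^ 8 < 1 := by norm_num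
  obtain ⟨hW_lo, hW_hi⟩ := tsum_mem_Icc_of_monotoneOn_of_le (fun _ hq ↦ acceptWeight_nonneg hq)
    monotoneOn_acceptWeight (fun _ hq _ ↦ acceptWeight_le hq) 8 (by norm_num) hlo.le hhi.le h8
  obtain ⟨hA_lo, hA_hi⟩ := tsum_mem_Icc_of_monotoneOn_of_le (fun _ hq ↦ acceptCost_nonneg hq)
    monotoneOn_acceptCost (fun _ hq _ ↦ acceptCost_le hq) 8 (by norm_num) hlo.le hhi.le h8
  obtain ⟨hR_lo, hR_hi⟩ := tsum_mem_Icc_of_monotoneOn_of_le (fun _ hq ↦ rejectCost_nonneg hq)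
    monotoneOn_rejectCost (fun _ hq hq₁ ↦ rejectCost_le hq hq₁) 8 (by norm_num) hlo.le hhi.le h8
  have hW_pos : 0 < ∑' k, acceptWeight p₁ k :=
    lt_of_lt_of_le (by norm_num [acceptWeight, sum_range_succ]) hW_lo
  rw [hB, hC, mul_div_mul_right _ _ hp₀.ne', lt_div_iff₀ hW_pos, div_lt_iff₀ hW_pos]
  exact ⟨by linarith [truncated_ratio_gt], by linarith [truncated_ratio_lt]⟩
end

section
/- Let k ≥ 1 be an integer, let x be a real number with 0 < x < 1, and set m = 2k + 2 and τ_k(x) = exp( x (2k + x) / (2k + 2) ). Define S₁ = ∑_{n=1}^{∞} ∑_{i=0}^{n−1} C(n−1, i) (x/m)^i (2k/m)^{n−1−i} (2n − 1 + i) ( x^{n−1}/(n−1)! − x^{n}/n! ), S₂ = ∑_{n=1}^{∞} ∑_{i=0}^{n−1} C(n−1, i) (x/m)^i (2k/m)^{n−1−i} (2n + i) ( x^{n}/n! ) (1/m), and S₃ = ∑_{n=1}^{∞} ∑_{i=0}^{n−1} C(n−1, i) (x/m)^i (2k/m)^{n−1−i} (2n + 1 + i) ( x^{n}/n! ) (1/m)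 (1 − x), where C(n−1, i) is the binomial coefficient. Then S₁ + S₂ + S₃ = ( (4k + x + 3) τ_k(x) − 2k − 3 ) / (2k + x). -/
/-!
The inner sums are binomial moments, `∑ᵢ C(n,i) aⁱ bⁿ⁻ⁱ (A + i) = (A + n a/(a+b)) (a+b)ⁿ`, so with
`a + b = (2k + x)/m` every series becomes an affine-in-`n` combination of `uⁿ/n!` and
`uⁿ⁺¹/(n+1)!` at `u = (a+b)x = x(2k+x)/m`. These sum to `(α + βu)eᵘ` and
`(α - β)(eᵘ - 1) + βueᵘ`, and the closed form is then algebra.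
-/

open Finset Nat

theorem sum_range_choose_mul_pow_mul_cast {R : Type*} [CommSemiring R] (a b : R) (n : ℕ) :
    ∑ i ∈ range (n + 1), (n.choose i : R) * a ^ i * b ^ (n - i) * i = n * a * (a + b) ^ (n - 1) := by
  cases n with
  | zero => simp
  | succ p =>
    have hterm (j : ℕ) : ((p + 1).choose (j + 1) : R) * a ^ (j + 1) * b ^ (p + 1 - (j + 1)) *
        ((j + 1 : ℕ) : R) = (p + 1) * a * ((p.choose j : R) * a ^ j * b ^ (p - j)) := by
      have h : ((p + 1).choose (j + 1) : R) * ((j + 1 : ℕ) : R) = (p + 1) * p.choose j := by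
        rw [← Nat.cast_mul, ← add_one_mul_choose_eq]
        push_cast
        rfl
      calc _ = ((p + 1).choose (j + 1) : R) * ((j + 1 : ℕ) : R) * a * (a ^ j * b ^ (p - j)) := by
            rw [Nat.add_sub_add_right]; ring
        _ = _ := by rw [h]; ring
    rw [sum_range_succ', Nat.cast_zero, mul_zero, add_zero, sum_congr rfl fun j _ => hterm j,
      ← mul_sum, add_pow, Nat.add_sub_cancel]
    push_cast
    exact congrArg _ (sum_congr rfl fun j _ => by ring)

theorem sum_range_choose_mul_pow_mul_add_cast {K : Type*} [Field K] {a b : K} (hab : a + b ≠ 0)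
    (A : K) (n : ℕ) :
    ∑ i ∈ range (n + 1), (n.choose i : K) * a ^ i * b ^ (n - i) * (A + i) =
      (A + a / (a + b) * n) * (a + b) ^ n := by
  have hbinom : ∑ i ∈ range (n + 1), (n.choose i : K) * a ^ i * b ^ (n - i) = (a + b) ^ n := by
    rw [add_pow]
    exact sum_congr rfl fun i _ => by ring
  simp only [mul_add, sum_add_distrib, ← sum_mul, hbinom, sum_range_choose_mul_pow_mul_cast]
  cases n with
  | zero => simp
  | succ p => rw [Nat.add_sub_cancel]; field_simp; ring

namespace Real

theorem hasSum_affine_mul_pow_div_factorial (α β u : ℝ) :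
    HasSum (fun n : ℕ => (α + β * n) * (u ^ n / n !)) ((α + β * u) * exp u) := by
  have hexp : HasSum (fun n : ℕ => u ^ n / n !) (exp u) := by
    rw [exp_eq_exp_ℝ]
    exact NormedSpace.expSeries_div_hasSum_exp u
  have hmoment : HasSum (fun n : ℕ => n * (u ^ n / n !)) (u * exp u) := by
    rw [← hasSum_nat_add_iff' 1, sum_range_one, Nat.cast_zero, zero_mul, sub_zero]
    refine (hexp.mul_left u).congr_fun fun n => ?_
    rw [factorial_succ, pow_succ]
    push_cast
    field_simp
  rw [show (α + β * u) * exp u = α * exp u + β * (u * exp u) by ring]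
  exact ((hexp.mul_left α).add (hmoment.mul_left β)).congr_fun fun n => by ring

theorem hasSum_affine_mul_pow_succ_div_factorial (α β u : ℝ) :
    HasSum (fun n : ℕ => (α + β * n) * (u ^ (n + 1) / (n + 1)!))
      ((α - β) * (exp u - 1) + β * u * exp u) := by
  have h := hasSum_affine_mul_pow_div_factorial (α - β) β u
  rw [← hasSum_nat_add_iff' 1, sum_range_one] at h
  simp only [Nat.cast_zero, mul_zero, add_zero, pow_zero, factorial_zero, Nat.cast_one, div_one,
    mul_one] at h
  rw [show (α - β) * (exp u - 1) + β * u * exp u = (α - β + β * u) * exp u - (α - β) by ring]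
  exact h.congr_fun fun n => by push_cast; ring

end Real

theorem hasSum_sum_choose_mul_pow_mul_div_factorial {a b : ℝ} (hab : a + b ≠ 0) (x : ℝ)
    {A : ℕ → ℝ} {α β : ℝ} (hA : ∀ n, A n = α + β * n) :
    HasSum (fun n : ℕ => (∑ i ∈ range (n + 1), (n.choose i : ℝ) * a ^ i * b ^ (n - i) * (A n + i)) *
      (x ^ n / n !)) ((α + (β + a / (a + b)) * ((a + b) * x)) * Real.exp ((a + b) * x)) :=
  (Real.hasSum_affine_mul_pow_div_factorial _ _ _).congr_fun fun n => by
    rw [sum_range_choose_mul_pow_mul_add_cast hab, hA, mul_pow]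
    ring

theorem hasSum_sum_choose_mul_pow_mul_succ_div_factorial {a b : ℝ} (hab : a + b ≠ 0) (x : ℝ)
    {A : ℕ → ℝ} {α β : ℝ} (hA : ∀ n, A n = α + β * n) :
    HasSum (fun n : ℕ => (∑ i ∈ range (n + 1), (n.choose i : ℝ) * a ^ i * b ^ (n - i) * (A n + i)) *
      (x ^ (n + 1) / (n + 1)!))
      (((α - (β + a / (a + b))) * (Real.exp ((a + b) * x) - 1) +
        (β + a / (a + b)) * ((a + b) * x) * Real.exp ((a + b) * x)) / (a + b)) :=
  ((Real.hasSum_affine_mul_pow_succ_div_factorial _ _ _).div_const _).congr_fun fun n => by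
    rw [sum_range_choose_mul_pow_mul_add_cast hab, hA, mul_pow, pow_succ (a + b)]
    field_simp
    ring

theorem karney_alg3_expected_deviates_general (k : ℕ) (x : ℝ)
    (hx0 : 0 < x) :
    let m : ℝ := 2 * (k : ℝ) + 2
    let τ : ℝ := Real.exp (x * (2 * (k : ℝ) + x) / (2 * (k : ℝ) + 2))
    let S₁ : ℝ := ∑' n : ℕ, ∑ i ∈ Finset.range (n + 1),
      (Nat.choose n i : ℝ) * (x / m) ^ i * (2 * (k : ℝ) / m) ^ (n - i) *
        (2 * ((n : ℝ) + 1) - 1 + (i : ℝ)) *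
        (x ^ n / (Nat.factorial n : ℝ) - x ^ (n + 1) / (Nat.factorial (n + 1) : ℝ))
    let S₂ : ℝ := ∑' n : ℕ, ∑ i ∈ Finset.range (n + 1),
      (Nat.choose n i : ℝ) * (x / m) ^ i * (2 * (k : ℝ) / m) ^ (n - i) *
        (2 * ((n : ℝ) + 1) + (i : ℝ)) *
        (x ^ (n + 1) / (Nat.factorial (n + 1) : ℝ)) * (1 / m)
    let S₃ : ℝ := ∑' n : ℕ, ∑ i ∈ Finset.range (n + 1),
      (Nat.choose n i : ℝ) * (x / m) ^ i * (2 * (k : ℝ) / m) ^ (n - i) *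
        (2 * ((n : ℝ) + 1) + 1 + (i : ℝ)) *
        (x ^ (n + 1) / (Nat.factorial (n + 1) : ℝ)) * (1 / m) * (1 - x)
    S₁ + S₂ + S₃ = ((4 * (k : ℝ) + x + 3) * τ - 2 * (k : ℝ) - 3) / (2 * (k : ℝ) + x) := by
  intro m τ S₁ S₂ S₃
  have hs : x / m + 2 * k / m ≠ 0 := by positivity
  have hτ : τ = Real.exp ((x / m + 2 * k / m) * x) := by
    simp only [τ, m]
    congr 1
    field_simp
    ring
  have h₁ := (hasSum_sum_choose_mul_pow_mul_div_factorial hs x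
      (A := fun n => 2 * ((n : ℝ) + 1) - 1) (α := 1) (β := 2) fun n => by ring).sub
    (hasSum_sum_choose_mul_pow_mul_succ_div_factorial hs x
      (A := fun n => 2 * ((n : ℝ) + 1) - 1) (α := 1) (β := 2) fun n => by ring)
  have h₂ := (hasSum_sum_choose_mul_pow_mul_succ_div_factorial hs x
      (A := fun n => 2 * ((n : ℝ) + 1)) (α := 2) (β := 2) fun n => by ring).mul_right (1 / m)
  have h₃ := ((hasSum_sum_choose_mul_pow_mul_succ_div_factorial hs x
      (A := fun n => 2 * ((n : ℝ) + 1) + 1) (α := 3) (β := 2) fun n => by ring).mul_right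
    (1 / m)).mul_right (1 - x)
  simp only [S₁, ← sum_mul]
  -- split before unfolding `S₃`, whose factor `1 - x` must stay whole
  simp only [mul_sub]
  simp only [S₂, S₃, ← sum_mul]
  rw [h₁.tsum_eq, h₂.tsum_eq, h₃.tsum_eq, hτ]
  simp only [m] at hs ⊢
  field_simp
  ring

/-- Proposition 4: for an integer `k ≥ 1` and `0 < x < 1`, with `m = 2k + 2` and
`τ_k(x) = exp(x(2k + x)/(2k + 2))`, the three series `S₁`, `S₂`, `S₃`
(each reindexed by `n ↦ n + 1`, with inner index `i` ranging over `0, …, n`)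
sum to `((4k + x + 3)τ_k(x) − 2k − 3)/(2k + x)`. -/
theorem karney_alg3_expected_deviates (k : ℕ) (hk : 1 ≤ k) (x : ℝ)
    (hx0 : 0 < x) (hx1 : x < 1) :
    let m : ℝ := 2 * (k : ℝ) + 2
    let τ : ℝ := Real.exp (x * (2 * (k : ℝ) + x) / (2 * (k : ℝ) + 2))
    let S₁ : ℝ := ∑' n : ℕ, ∑ i ∈ Finset.range (n + 1),
      (Nat.choose n i : ℝ) * (x / m) ^ i * (2 * (k : ℝ) / m) ^ (n - i) *
        (2 * ((n : ℝ) + 1) - 1 + (i : ℝ)) *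
        (x ^ n / (Nat.factorial n : ℝ) - x ^ (n + 1) / (Nat.factorial (n + 1) : ℝ))
    let S₂ : ℝ := ∑' n : ℕ, ∑ i ∈ Finset.range (n + 1),
      (Nat.choose n i : ℝ) * (x / m) ^ i * (2 * (k : ℝ) / m) ^ (n - i) *
        (2 * ((n : ℝ) + 1) + (i : ℝ)) *
        (x ^ (n + 1) / (Nat.factorial (n + 1) : ℝ)) * (1 / m)
    let S₃ : ℝ := ∑' n : ℕ, ∑ i ∈ Finset.range (n + 1),
      (Nat.choose n i : ℝ) * (x / m) ^ i * (2 * (k : ℝ) / m) ^ (n - i) *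
        (2 * ((n : ℝ) + 1) + 1 + (i : ℝ)) *
        (x ^ (n + 1) / (Nat.factorial (n + 1) : ℝ)) * (1 / m) * (1 - x)
    S₁ + S₂ + S₃ = ((4 * (k : ℝ) + x + 3) * τ - 2 * (k : ℝ) - 3) / (2 * (k : ℝ) + x) :=
  karney_alg3_expected_deviates_general k x hx0
end

section
/- Let x be a real number with 0 < x < 1. Then ∑_{n=1}^{∞} [ (1/2)^n ( x^{n−1}/(n−1)! ) x^{n−1} (2n − 2) + (1/2)^n x^{n−1} ( x^{n−1}/(n−1)! − x^{n}/n! ) (2n − 1) + (1/2)^n x^{n−1} ( x^{n}/n! ) (1 − x) (2n) ] = ( (x + 2) e^{x²/2} − 2 ) / (2x). -/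
/-!
Put `t = x²/2`, so that `(1/2)ⁿ x²ⁿ = tⁿ`. The `n`-th summand then regroups as
`2 n tⁿ/n! - x² tⁿ/n! + ½ tⁿ/n! + x⁻¹ tⁿ⁺¹/(n+1)!`, and the exponential series gives the sums
`2t eᵗ - x² eᵗ + ½ eᵗ + x⁻¹ (eᵗ - 1)`. The first two cancel because `2t = x²`, leaving
`eᵗ/2 + (eᵗ - 1)/x = ((x + 2) eᵗ - 2)/(2x)`.
-/

open Nat

namespace Real

theorem hasSum_pow_div_factorial (t : ℝ) : HasSum (fun n : ℕ => t ^ n / n !) (exp t) := by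
  rw [exp_eq_exp_ℝ]
  exact NormedSpace.expSeries_div_hasSum_exp t

theorem hasSum_natCast_mul_pow_div_factorial (t : ℝ) :
    HasSum (fun n : ℕ => n * t ^ n / n !) (t * exp t) := by
  have hshift : (fun n : ℕ => ((n + 1 : ℕ) : ℝ) * t ^ (n + 1) / (n + 1) !) =
      fun n => t * (t ^ n / n !) := by
    ext n
    push_cast [factorial_succ, pow_succ]
    field_simp
  have h := (hasSum_pow_div_factorial t).mul_left t
  rw [← hshift] at h
  simpa using (hasSum_nat_add_iff (f := fun n : ℕ => (n : ℝ) * t ^ n / n !) 1).mp h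

theorem hasSum_pow_succ_div_factorial_succ (t : ℝ) :
    HasSum (fun n : ℕ => t ^ (n + 1) / (n + 1) !) (exp t - 1) := by
  simpa using (hasSum_nat_add_iff' 1).mpr (hasSum_pow_div_factorial t)

end Real

open Real

theorem karney_alg3_k0_summand_eq {x : ℝ} (hx : x ≠ 0) (n : ℕ) :
    (1 / 2 : ℝ) ^ (n + 1) * (x ^ n / (Nat.factorial n : ℝ)) * x ^ n *
            (2 * ((n : ℝ) + 1) - 2) +
          (1 / 2 : ℝ) ^ (n + 1) * x ^ n *
            (x ^ n / (Nat.factorial n : ℝ) - x ^ (n + 1) / (Nat.factorial (n + 1) : ℝ)) *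
            (2 * ((n : ℝ) + 1) - 1) +
          (1 / 2 : ℝ) ^ (n + 1) * x ^ n * (x ^ (n + 1) / (Nat.factorial (n + 1) : ℝ)) *
            (1 - x) * (2 * ((n : ℝ) + 1)) =
      2 * (n * (x ^ 2 / 2) ^ n / n !) - x ^ 2 * ((x ^ 2 / 2) ^ n / n !) +
        1 / 2 * ((x ^ 2 / 2) ^ n / n !) + x⁻¹ * ((x ^ 2 / 2) ^ (n + 1) / (n + 1) !) := by
  push_cast [factorial_succ]
  field_simp
  ring

theorem karney_alg3_k0_expected_deviates_general (x : ℝ) (hx0 : 0 < x) :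
    HasSum (fun n : ℕ =>
        (1 / 2 : ℝ) ^ (n + 1) * (x ^ n / (Nat.factorial n : ℝ)) * x ^ n *
            (2 * ((n : ℝ) + 1) - 2) +
          (1 / 2 : ℝ) ^ (n + 1) * x ^ n *
            (x ^ n / (Nat.factorial n : ℝ) - x ^ (n + 1) / (Nat.factorial (n + 1) : ℝ)) *
            (2 * ((n : ℝ) + 1) - 1) +
          (1 / 2 : ℝ) ^ (n + 1) * x ^ n * (x ^ (n + 1) / (Nat.factorial (n + 1) : ℝ)) *
            (1 - x) * (2 * ((n : ℝ) + 1)))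
      (((x + 2) * Real.exp (x ^ 2 / 2) - 2) / (2 * x)) := by
  have hx : x ≠ 0 := hx0.ne'
  have hexp := hasSum_pow_div_factorial (x ^ 2 / 2)
  have hsum := ((((hasSum_natCast_mul_pow_div_factorial (x ^ 2 / 2)).mul_left 2).sub
    (hexp.mul_left (x ^ 2))).add (hexp.mul_left (1 / 2))).add
    ((hasSum_pow_succ_div_factorial_succ (x ^ 2 / 2)).mul_left x⁻¹)
  have hvalue : ((x + 2) * exp (x ^ 2 / 2) - 2) / (2 * x) =
      2 * (x ^ 2 / 2 * exp (x ^ 2 / 2)) - x ^ 2 * exp (x ^ 2 / 2) + 1 / 2 * exp (x ^ 2 / 2) +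
        x⁻¹ * (exp (x ^ 2 / 2) - 1) := by
    field_simp
    ring
  rwa [funext (karney_alg3_k0_summand_eq hx), hvalue]

/-- Proposition 5: for `0 < x < 1`,
`∑_{n=1}^{∞} [ (1/2)^n (x^{n−1}/(n−1)!) x^{n−1} (2n − 2)
  + (1/2)^n x^{n−1} (x^{n−1}/(n−1)! − x^{n}/n!) (2n − 1)
  + (1/2)^n x^{n−1} (x^{n}/n!) (1 − x) (2n) ]
  = ((x + 2) e^{x²/2} − 2) / (2x)`.
(The series is reindexed by `n ↦ n + 1`.) -/
theorem karney_alg3_k0_expected_deviates (x : ℝ) (hx0 : 0 < x) (hx1 : x < 1) :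
    HasSum (fun n : ℕ =>
        (1 / 2 : ℝ) ^ (n + 1) * (x ^ n / (Nat.factorial n : ℝ)) * x ^ n *
            (2 * ((n : ℝ) + 1) - 2) +
          (1 / 2 : ℝ) ^ (n + 1) * x ^ n *
            (x ^ n / (Nat.factorial n : ℝ) - x ^ (n + 1) / (Nat.factorial (n + 1) : ℝ)) *
            (2 * ((n : ℝ) + 1) - 1) +
          (1 / 2 : ℝ) ^ (n + 1) * x ^ n * (x ^ (n + 1) / (Nat.factorial (n + 1) : ℝ)) *
            (1 - x) * (2 * ((n : ℝ) + 1)))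
      (((x + 2) * Real.exp (x ^ 2 / 2) - 2) / (2 * x)) :=
  karney_alg3_k0_expected_deviates_general x hx0
end

section
/- For all real numbers x and y with 0 < x < 1 and 0 < y < 1, the inequality ( e^{xy} (1 + y) − 1 ) / y < ( e^{xy} (1 + x) − 1 ) / x holds if and only if x < y. -/
/-! Each side is `e^{xy} + (e^{xy} - 1) / t` with `t` its denominator; since `e^{xy} > 1`
this is strictly decreasing in `t > 0`. -/

lemma mul_one_add_sub_one_div {a t : ℝ} (ht : t ≠ 0) :
    (a * (1 + t) - 1) / t = a + (a - 1) / t := by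
  field_simp
  ring

theorem alg6_argument_order_general (x y : ℝ) (hx0 : 0 < x)
    (hy0 : 0 < y) :
    (Real.exp (x * y) * (1 + y) - 1) / y < (Real.exp (x * y) * (1 + x) - 1) / x ↔
      x < y := by
  have hexp : 0 < Real.exp (x * y) - 1 := sub_pos.mpr (Real.one_lt_exp_iff.mpr (by positivity))
  rw [mul_one_add_sub_one_div hy0.ne', mul_one_add_sub_one_div hx0.ne', add_lt_add_iff_left,
    div_lt_div_iff_of_pos_left hexp hy0 hx0]

/-- For `0 < x < 1` and `0 < y < 1`,
`(e^{xy}(1 + y) − 1)/y < (e^{xy}(1 + x) − 1)/x` if and only if `x < y`. -/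
theorem alg6_argument_order (x y : ℝ) (hx0 : 0 < x) (hx1 : x < 1)
    (hy0 : 0 < y) (hy1 : y < 1) :
    (Real.exp (x * y) * (1 + y) - 1) / y < (Real.exp (x * y) * (1 + x) - 1) / x ↔
      x < y :=
  alg6_argument_order_general x y hx0 hy0
end

section
/- Let D(k) = e^{−k²/2} / ∑_{j=0}^{∞} e^{−j²/2} for integers k ≥ 0, and for integers k ≥ 1 let t_k(x) = ∑_{i=1}^{k−1} i e^{−x(i−1)} (1 − e^{−x}) + k e^{−x(k−1)}. Then the quantity W := ∑_{k=1}^{∞} D(k) ∫₀¹ t_k(x) e^{x} dx + ∑_{k=0}^{∞} D(k) ∫₀¹ ( ( (1 + x) e^{x²/2} − 1 ) / x ) e^{−kx} dx satisfies 2.01 < W < 2.02. -/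
/-!
Clearing the normalising constant `S = ∑ₖ e^{-k²/2}`, the claim reads
`2.01 S < ∑ₖ e^{-k²/2} cₖ < 2.02 S`, where `cₖ` is the sum of the two integrals at
index `k` (the first one vanishes at `k = 0`, so the two series merge). The expected
number of calls telescopes to `t_k(x) = ∑_{i<k} e^{-ix}`, so its integral is elementary.
The second integrand `g(x) = ((1 + x) e^{x²/2} - 1) / x` is squeezed between Taylor
polynomials of `e^{x²/2}`, and polynomials integrate against `e^{-cx}` through the
incomplete-gamma moments `∫₀¹ xⁿ e^{-cx} dx = n!/c^{n+1} (1 - e^{-c} ∑_{j≤n} c^j/j!)`.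
This pins down `c₀, …, c₃` to about `10⁻⁴`. For the remaining terms it suffices that
`e ≤ cₖ ≤ 2k + 2`, because `e^{-k²/2}` decays superexponentially; the margins left are
about `0.012` and `0.001`.
-/

open Real Finset MeasureTheory intervalIntegral
open scoped Nat

namespace DiscreteGaussian

lemma tsum_le_sum_range_add_geometric {f : ℕ → ℝ} (hf : Summable f) (K : ℕ) {C ρ : ℝ}
    (hρ0 : 0 ≤ ρ) (hρ1 : ρ < 1) (h : ∀ j, f (j + K) ≤ C * ρ ^ j) :
    ∑' k, f k ≤ ∑ k ∈ range K, f k + C / (1 - ρ) := by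
  rw [← hf.sum_add_tsum_nat_add K, div_eq_mul_inv, ← tsum_geometric_of_lt_one hρ0 hρ1,
    ← tsum_mul_left]
  exact add_le_add_right (((summable_nat_add_iff K).mpr hf).tsum_le_tsum h
    ((summable_geometric_of_lt_one hρ0 hρ1).mul_left C)) _

noncomputable def moment (n : ℕ) (c : ℝ) : ℝ := ∫ x in (0 : ℝ)..1, x ^ n * exp (-c * x)

lemma moment_zero_right (n : ℕ) : moment n 0 = 1 / (n + 1) := by
  simp [moment, integral_pow]

lemma hasDerivAt_neg_exp_neg_mul_div {c : ℝ} (hc : c ≠ 0) (x : ℝ) :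
    HasDerivAt (fun y => -exp (-c * y) / c) (exp (-c * x)) x := by
  refine (((hasDerivAt_id x).const_mul (-c)).exp.neg.div_const c).congr_deriv ?_
  field_simp
  simp

lemma moment_zero_left {c : ℝ} (hc : c ≠ 0) : moment 0 c = (1 - exp (-c)) / c := by
  simp only [moment, pow_zero, one_mul]
  rw [integral_eq_sub_of_hasDerivAt (fun x _ => hasDerivAt_neg_exp_neg_mul_div hc x)
    (by apply Continuous.intervalIntegrable; fun_prop)]
  simp
  ring

lemma moment_succ {c : ℝ} (hc : c ≠ 0) (n : ℕ) :
    moment (n + 1) c = ((n + 1) * moment n c - exp (-c)) / c := by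
  have hu (x : ℝ) : HasDerivAt (fun y => y ^ (n + 1)) ((n + 1) * x ^ n) x := by
    simpa using hasDerivAt_pow (n + 1) x
  have hparts := integral_mul_deriv_eq_deriv_mul (a := 0) (b := 1) (fun x _ => hu x)
    (fun x _ => hasDerivAt_neg_exp_neg_mul_div hc x)
    (by apply Continuous.intervalIntegrable; fun_prop)
    (by apply Continuous.intervalIntegrable; fun_prop)
  have hconst : ∫ x in (0:ℝ)..1, (n + 1) * x ^ n * (-exp (-c * x) / c)
      = -((n + 1) / c) * moment n c := by
    rw [moment, ← intervalIntegral.integral_const_mul]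
    congr 1; ext x; ring
  rw [moment, hparts, hconst]
  simp
  field_simp
  ring

lemma moment_eq_of_ne_zero {c : ℝ} (hc : c ≠ 0) (n : ℕ) :
    moment n c = n ! / c ^ (n + 1) * (1 - exp (-c) * ∑ j ∈ range (n + 1), c ^ j / j !) := by
  induction n with
  | zero => simp [moment_zero_left hc, div_eq_inv_mul]
  | succ n ih =>
    rw [moment_succ hc, ih, sum_range_succ _ (n + 1), Nat.factorial_succ]
    push_cast
    field_simp
    ring

lemma moment_nonneg (n : ℕ) (c : ℝ) : 0 ≤ moment n c :=
  integral_nonneg zero_le_one fun _ hx => mul_nonneg (pow_nonneg hx.1 n) (exp_pos _).le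

lemma moment_antitone (n : ℕ) : Antitone (moment n) := fun c c' hcc' => by
  refine integral_mono_on zero_le_one (by apply Continuous.intervalIntegrable; fun_prop)
    (by apply Continuous.intervalIntegrable; fun_prop) fun x hx => ?_
  gcongr
  · exact pow_nonneg hx.1 n
  · nlinarith [hx.1]

lemma moment_le {c : ℝ} (hc : 0 ≤ c) (n : ℕ) : moment n c ≤ 1 / (n + 1) :=
  moment_zero_right n ▸ moment_antitone n hc

lemma moment_zero_neg_one : moment 0 (-1) = exp 1 - 1 := by
  rw [moment_zero_left (by norm_num)]
  ring_nf

/-- `halfSqCost 0 = 0` by the convention `x / 0 = 0`; only the values on `(0, 1]` matter. -/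
noncomputable def halfSqCost (x : ℝ) : ℝ := ((1 + x) * exp (x ^ 2 / 2) - 1) / x

noncomputable def halfSqTaylor (N : ℕ) (x : ℝ) : ℝ :=
  1 + ∑ m ∈ range N, (x ^ (2 * m + 1) + x ^ (2 * m + 2)) / (2 ^ (m + 1) * (m + 1)!)

@[fun_prop]
lemma continuous_halfSqTaylor (N : ℕ) : Continuous (halfSqTaylor N) := by
  unfold halfSqTaylor; fun_prop

/-- The remainder factor of `Real.exp_bound'` at order `N + 1`, for `e^{x²/2}`. -/
noncomputable def taylorErrorCoeff (N : ℕ) : ℝ := (N + 2) / (2 ^ (N + 1) * (N + 1)! * (N + 1))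

lemma mul_halfSqTaylor (N : ℕ) (x : ℝ) :
    x * halfSqTaylor N x = (1 + x) * (∑ m ∈ range (N + 1), (x ^ 2 / 2) ^ m / m !) - 1 := by
  induction N with
  | zero => simp [halfSqTaylor]
  | succ N ih =>
    simp only [halfSqTaylor] at ih ⊢
    rw [sum_range_succ _ N, sum_range_succ _ (N + 1)]
    have hterm : x * ((x ^ (2 * N + 1) + x ^ (2 * N + 2)) / (2 ^ (N + 1) * (N + 1)!))
        = (1 + x) * ((x ^ 2 / 2) ^ (N + 1) / (N + 1)!) := by
      rw [div_pow]
      field_simp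
      ring
    linear_combination ih + hterm

lemma halfSqTaylor_le_halfSqCost (N : ℕ) {x : ℝ} (hx : 0 < x) :
    halfSqTaylor N x ≤ halfSqCost x := by
  rw [halfSqCost, le_div_iff₀ hx, mul_comm, mul_halfSqTaylor]
  have := sum_le_exp_of_nonneg (by positivity : 0 ≤ x ^ 2 / 2) (N + 1)
  gcongr

lemma halfSqCost_le {x : ℝ} (hx0 : 0 < x) (hx1 : x ≤ 1) (N : ℕ) :
    halfSqCost x ≤
      halfSqTaylor N x + taylorErrorCoeff N * (x ^ (2 * N + 1) + x ^ (2 * N + 2)) := by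
  have hexp := exp_bound' (x := x ^ 2 / 2) (by positivity) (by nlinarith) (n := N + 1) N.succ_pos
  have hrem : (1 + x) * ((x ^ 2 / 2) ^ (N + 1) * ((N + 1 : ℕ) + 1) / ((N + 1)! * (N + 1 : ℕ)))
      = x * (taylorErrorCoeff N * (x ^ (2 * N + 1) + x ^ (2 * N + 2))) := by
    rw [taylorErrorCoeff, div_pow]
    push_cast
    field_simp
    ring
  rw [halfSqCost, div_le_iff₀ hx0, mul_comm _ x, mul_add, mul_halfSqTaylor, ← hrem]
  nlinarith

lemma intervalIntegrable_halfSqCost_mul_exp (c : ℝ) :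
    IntervalIntegrable (fun x => halfSqCost x * exp (-c * x)) volume 0 1 := by
  have hdom : IntervalIntegrable (fun x => (1 + x + x ^ 2) * exp (-c * x)) volume 0 1 := by
    apply Continuous.intervalIntegrable; fun_prop
  refine hdom.mono_fun (by unfold halfSqCost; fun_prop) ?_
  rw [Set.uIoc_of_le zero_le_one]
  refine (ae_restrict_mem measurableSet_Ioc).mono fun x hx => ?_
  have hlow := halfSqTaylor_le_halfSqCost 0 hx.1
  have hup := halfSqCost_le hx.1 hx.2 0
  simp only [halfSqTaylor, range_zero, sum_empty] at hlow hup
  norm_num [taylorErrorCoeff] at hup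
  have hx0 : 0 ≤ x := hx.1.le
  simp only [norm_mul, norm_of_nonneg (exp_pos _).le,
    norm_of_nonneg (by linarith : 0 ≤ halfSqCost x),
    norm_of_nonneg (by positivity : 0 ≤ 1 + x + x ^ 2)]
  gcongr
  linarith

noncomputable def halfSqIntegral (c : ℝ) : ℝ :=
  ∫ x in (0 : ℝ)..1, halfSqCost x * exp (-c * x)

noncomputable def taylorMoments (N : ℕ) (c : ℝ) : ℝ :=
  moment 0 c +
    ∑ m ∈ range N, (moment (2 * m + 1) c + moment (2 * m + 2) c) / (2 ^ (m + 1) * (m + 1)!)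

lemma integral_halfSqTaylor_mul_exp (N : ℕ) (c : ℝ) :
    ∫ x in (0 : ℝ)..1, halfSqTaylor N x * exp (-c * x) = taylorMoments N c := by
  simp only [halfSqTaylor, taylorMoments, moment, add_mul, sum_mul, div_mul_eq_mul_div]
  rw [intervalIntegral.integral_add (by apply Continuous.intervalIntegrable; fun_prop)
    (by apply Continuous.intervalIntegrable; fun_prop), intervalIntegral.integral_finsetSum
    (fun m _ => by apply Continuous.intervalIntegrable; fun_prop)]
  simp only [pow_zero, intervalIntegral.integral_div]
  congr 2 with m
  rw [intervalIntegral.integral_add (by apply Continuous.intervalIntegrable; fun_prop)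
    (by apply Continuous.intervalIntegrable; fun_prop)]

lemma taylorMoments_le_halfSqIntegral (N : ℕ) (c : ℝ) :
    taylorMoments N c ≤ halfSqIntegral c := by
  rw [← integral_halfSqTaylor_mul_exp]
  refine integral_mono_on_of_le_Ioo zero_le_one (by apply Continuous.intervalIntegrable; fun_prop)
    (intervalIntegrable_halfSqCost_mul_exp c) fun x hx => ?_
  exact mul_le_mul_of_nonneg_right (halfSqTaylor_le_halfSqCost N hx.1) (exp_pos _).le

lemma halfSqIntegral_le (N : ℕ) (c : ℝ) :
    halfSqIntegral c ≤
      taylorMoments N c + taylorErrorCoeff N * (moment (2 * N + 1) c + moment (2 * N + 2) c) := by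
  have hsplit : ∫ x in (0 : ℝ)..1,
      (halfSqTaylor N x + taylorErrorCoeff N * (x ^ (2 * N + 1) + x ^ (2 * N + 2))) * exp (-c * x)
      = taylorMoments N c + taylorErrorCoeff N * (moment (2 * N + 1) c + moment (2 * N + 2) c) := by
    simp only [add_mul, mul_assoc]
    rw [intervalIntegral.integral_add (by apply Continuous.intervalIntegrable; fun_prop)
      (by apply Continuous.intervalIntegrable; fun_prop), integral_halfSqTaylor_mul_exp,
      intervalIntegral.integral_const_mul, intervalIntegral.integral_add
      (by apply Continuous.intervalIntegrable; fun_prop)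
      (by apply Continuous.intervalIntegrable; fun_prop)]
    rfl
  rw [← hsplit]
  refine integral_mono_on_of_le_Ioo zero_le_one (intervalIntegrable_halfSqCost_mul_exp c)
    (by apply Continuous.intervalIntegrable; fun_prop) fun x hx => ?_
  exact mul_le_mul_of_nonneg_right (halfSqCost_le hx.1 hx.2.le N) (exp_pos _).le

lemma halfSqIntegral_nonneg (c : ℝ) : 0 ≤ halfSqIntegral c :=
  (moment_nonneg 0 c).trans (by simpa [taylorMoments] using taylorMoments_le_halfSqIntegral 0 c)

lemma halfSqIntegral_le_two {c : ℝ} (hc : 0 ≤ c) : halfSqIntegral c ≤ 2 := by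
  have h := halfSqIntegral_le 0 c
  have h0 := moment_le hc 0
  have h1 := moment_le hc 1
  have h2 := moment_le hc 2
  norm_num [taylorMoments, taylorErrorCoeff] at h h0 h1 h2
  linarith

noncomputable def expectedCalls (k : ℕ) (x : ℝ) : ℝ :=
  (∑ i ∈ Icc 1 (k - 1), (i : ℝ) * exp (-x * ((i : ℝ) - 1)) * (1 - exp (-x))) +
    (k : ℝ) * exp (-x * ((k : ℝ) - 1))

lemma expectedCalls_eq_sum (k : ℕ) (x : ℝ) :
    expectedCalls k x = ∑ i ∈ range k, exp (-i * x) := by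
  rcases k with _ | n
  · simp [expectedCalls]
  induction n with
  | zero => simp [expectedCalls]
  | succ n ih =>
    simp only [expectedCalls, Nat.add_sub_cancel] at ih ⊢
    rw [sum_Icc_succ_top (by omega), sum_range_succ, ← ih]
    have h1 : exp (-x * ((n + 1 + 1 : ℕ) - 1)) = exp (-x * ((n + 1 : ℕ) - 1)) * exp (-x) := by
      rw [← exp_add]; push_cast; ring_nf
    have h2 : exp (-(n + 1 : ℕ) * x) = exp (-x * ((n + 1 : ℕ) - 1)) * exp (-x) := by
      rw [← exp_add]; push_cast; ring_nf
    rw [h1, h2]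
    push_cast
    ring

noncomputable def callsCost (k : ℕ) : ℝ := ∫ x in (0 : ℝ)..1, expectedCalls k x * exp x

lemma callsCost_eq_sum_moment (k : ℕ) : callsCost k = ∑ i ∈ range k, moment 0 (i - 1) := by
  simp only [callsCost, expectedCalls_eq_sum, sum_mul, moment, pow_zero, one_mul]
  rw [intervalIntegral.integral_finsetSum
    (fun i _ => by apply Continuous.intervalIntegrable; fun_prop)]
  congr 1 with i
  congr 1 with x
  rw [← exp_add]
  ring_nf

lemma callsCost_nonneg (k : ℕ) : 0 ≤ callsCost k := by
  rw [callsCost_eq_sum_moment]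
  exact sum_nonneg fun i _ => moment_nonneg 0 _

lemma callsCost_le (k : ℕ) : callsCost k ≤ 2 * k := by
  have hterm (i : ℕ) : moment 0 (i - 1) ≤ 2 := by
    have := moment_antitone 0 (by simp : (-1 : ℝ) ≤ i - 1)
    linarith [moment_zero_neg_one, exp_one_lt_d9]
  rw [callsCost_eq_sum_moment]
  simpa [mul_comm] using sum_le_sum fun i (_ : i ∈ range k) => hterm i

lemma exp_one_le_callsCost {k : ℕ} (hk : 2 ≤ k) : exp 1 ≤ callsCost k := by
  have h2 : ∑ i ∈ range 2, moment 0 ((i : ℕ) - 1) = exp 1 := by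
    norm_num [sum_range_succ, moment_zero_neg_one, moment_zero_right]
  rw [callsCost_eq_sum_moment, ← h2]
  exact sum_le_sum_of_subset_of_nonneg (range_subset_range.mpr hk) fun _ _ _ => moment_nonneg 0 _

noncomputable def stepCost (k : ℕ) : ℝ := callsCost k + halfSqIntegral k

lemma stepCost_nonneg (k : ℕ) : 0 ≤ stepCost k :=
  add_nonneg (callsCost_nonneg k) (halfSqIntegral_nonneg k)

lemma stepCost_le (k : ℕ) : stepCost k ≤ 2 * k + 2 :=
  add_le_add (callsCost_le k) (halfSqIntegral_le_two k.cast_nonneg)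

lemma exp_neg_nat_bounds (n : ℕ) :
    0.36787944116 ^ n ≤ exp (-n) ∧ exp (-n) ≤ 0.3678794412 ^ n := by
  rw [show (-n : ℝ) = n * (-1) by ring, exp_nat_mul]
  exact ⟨pow_le_pow_left₀ (by norm_num) exp_neg_one_gt_d9.le n,
    pow_le_pow_left₀ (exp_pos _).le exp_neg_one_lt_d9.le n⟩

lemma stepCost_zero_bounds : 1.4793 ≤ stepCost 0 ∧ stepCost 0 ≤ 1.4802 := by
  have hlo := taylorMoments_le_halfSqIntegral 3 0
  have hhi := halfSqIntegral_le 3 0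
  norm_num [taylorMoments, taylorErrorCoeff, moment_zero_right, sum_range_succ, Nat.factorial]
    at hlo hhi
  simp only [stepCost, callsCost_eq_sum_moment, range_zero, sum_empty, zero_add, Nat.cast_zero]
  constructor <;> linarith

lemma stepCost_one_bounds : 2.5907 ≤ stepCost 1 ∧ stepCost 1 ≤ 2.5911 := by
  have hlo := taylorMoments_le_halfSqIntegral 3 1
  have hhi := halfSqIntegral_le 3 1
  norm_num [taylorMoments, taylorErrorCoeff, moment_eq_of_ne_zero, sum_range_succ, Nat.factorial]
    at hlo hhi
  have hcalls : callsCost 1 = exp 1 - 1 := by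
    simp [callsCost_eq_sum_moment, moment_zero_neg_one]
  rw [stepCost, hcalls, Nat.cast_one]
  constructor <;> linarith [exp_one_gt_d9, exp_one_lt_d9, exp_neg_one_gt_d9, exp_neg_one_lt_d9]

lemma stepCost_two_bounds : 3.2780 ≤ stepCost 2 ∧ stepCost 2 ≤ 3.2783 := by
  have hlo := taylorMoments_le_halfSqIntegral 3 2
  have hhi := halfSqIntegral_le 3 2
  norm_num [taylorMoments, taylorErrorCoeff, moment_eq_of_ne_zero, sum_range_succ, Nat.factorial]
    at hlo hhi
  have hcalls : callsCost 2 = exp 1 := by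
    norm_num [callsCost_eq_sum_moment, sum_range_succ, moment_zero_neg_one, moment_zero_right]
  rw [stepCost, hcalls]
  have h2 := exp_neg_nat_bounds 2
  norm_num at h2
  constructor <;> linarith [exp_one_gt_d9, exp_one_lt_d9]

lemma stepCost_three_bounds : 3.7390 ≤ stepCost 3 ∧ stepCost 3 ≤ 3.7392 := by
  have hlo := taylorMoments_le_halfSqIntegral 3 3
  have hhi := halfSqIntegral_le 3 3
  norm_num [taylorMoments, taylorErrorCoeff, moment_eq_of_ne_zero, sum_range_succ, Nat.factorial]
    at hlo hhi
  have hcalls : callsCost 3 = exp 1 + 1 - exp (-1) := by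
    norm_num [callsCost_eq_sum_moment, sum_range_succ, moment_zero_neg_one, moment_zero_right,
      moment_zero_left]
    ring
  rw [stepCost, hcalls]
  have h3 := exp_neg_nat_bounds 3
  norm_num at h3
  constructor <;> linarith [exp_one_gt_d9, exp_one_lt_d9, exp_neg_one_gt_d9, exp_neg_one_lt_d9]

noncomputable def weight (k : ℕ) : ℝ := exp (-(k : ℝ) ^ 2 / 2)

lemma weight_zero : weight 0 = 1 := by simp [weight]

lemma weight_nonneg (k : ℕ) : 0 ≤ weight k := (exp_pos _).le

lemma weight_eq_pow (k : ℕ) : weight k = exp (-1 / 2) ^ (k ^ 2) := by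
  rw [weight, ← exp_nat_mul]
  push_cast
  ring_nf

lemma exp_neg_half_lt_one : exp (-1 / 2) < 1 := exp_lt_one_iff.mpr (by norm_num)

lemma exp_neg_half_bounds : 0.60653 ≤ exp (-1 / 2) ∧ exp (-1 / 2) ≤ 0.60654 := by
  have hsq : exp (-1 / 2) ^ 2 = exp (-1) := by rw [← exp_nat_mul]; norm_num
  have hpos := exp_pos (-1 / 2)
  constructor <;> nlinarith [exp_neg_one_gt_d9, exp_neg_one_lt_d9]

lemma weight_bounds (k : ℕ) :
    0.60653 ^ (k ^ 2) ≤ weight k ∧ weight k ≤ 0.60654 ^ (k ^ 2) := by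
  rw [weight_eq_pow]
  exact ⟨pow_le_pow_left₀ (by norm_num) exp_neg_half_bounds.1 _,
    pow_le_pow_left₀ (exp_pos _).le exp_neg_half_bounds.2 _⟩

lemma weight_le_pow (k : ℕ) : weight k ≤ exp (-1 / 2) ^ k := by
  rw [weight_eq_pow]
  exact pow_le_pow_of_le_one (exp_pos _).le exp_neg_half_lt_one.le (Nat.le_self_pow two_ne_zero k)

lemma weight_add_four_mul_le (j : ℕ) :
    weight (j + 4) * (2 * (j + 4 : ℕ)) ≤ 0.00272 * 0.037 ^ j := by
  have hq_hi := exp_neg_half_bounds.2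
  have hq0 := (exp_pos (-1 / 2)).le
  have hweight : weight (j + 4) ≤ exp (-1 / 2) ^ 16 * (exp (-1 / 2) ^ 8) ^ j := by
    rw [weight_eq_pow, ← pow_mul, ← pow_add]
    exact pow_le_pow_of_le_one hq0 exp_neg_half_lt_one.le (by nlinarith)
  have hlin : (2 * (j + 4 : ℕ) : ℝ) ≤ 8 * 2 ^ j := by
    have : j + 1 ≤ 2 ^ j := Nat.lt_two_pow_self
    exact_mod_cast (by omega : 2 * (j + 4) ≤ 8 * 2 ^ j)
  calc weight (j + 4) * (2 * (j + 4 : ℕ))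
      ≤ exp (-1 / 2) ^ 16 * (exp (-1 / 2) ^ 8) ^ j * (8 * 2 ^ j) :=
        mul_le_mul hweight hlin (by positivity) (by positivity)
    _ = 8 * exp (-1 / 2) ^ 16 * (2 * exp (-1 / 2) ^ 8) ^ j := by ring
    _ ≤ 8 * 0.00034 * 0.037 ^ j := by
        gcongr
        · exact (pow_le_pow_left₀ hq0 hq_hi 16).trans (by norm_num)
        · have : (0.60654 : ℝ) ^ 8 ≤ 0.0185 := by norm_num
          linarith [pow_le_pow_left₀ hq0 hq_hi 8]
    _ = 0.00272 * 0.037 ^ j := by norm_num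

lemma summable_weight : Summable weight :=
  (summable_geometric_of_lt_one (exp_pos _).le exp_neg_half_lt_one).of_nonneg_of_le
    weight_nonneg weight_le_pow

lemma summable_weight_mul_stepCost : Summable fun k => weight k * stepCost k := by
  have hq : ‖exp (-1 / 2 : ℝ)‖ < 1 := by
    rw [norm_of_nonneg (exp_pos _).le]; exact exp_neg_half_lt_one
  have hmaj := ((summable_pow_mul_geometric_of_norm_lt_one 1 hq).mul_left 2).add
    ((summable_geometric_of_norm_lt_one hq).mul_left 2)
  refine hmaj.of_nonneg_of_le (fun k => mul_nonneg (weight_nonneg k) (stepCost_nonneg k))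
    fun k => ?_
  calc weight k * stepCost k ≤ exp (-1 / 2) ^ k * (2 * k + 2) :=
        mul_le_mul (weight_le_pow k) (stepCost_le k) (stepCost_nonneg k) (by positivity)
    _ = _ := by ring

lemma summable_weight_mul_of_le {u : ℕ → ℝ} (h0 : ∀ k, 0 ≤ u k)
    (h : ∀ k, u k ≤ stepCost k) :
    Summable fun k => weight k * u k :=
  summable_weight_mul_stepCost.of_nonneg_of_le (fun k => mul_nonneg (weight_nonneg k) (h0 k))
    fun k => mul_le_mul_of_nonneg_left (h k) (weight_nonneg k)

lemma summable_weight_mul_stepCost_sub (r : ℝ) :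
    Summable fun k => weight k * (stepCost k - r) := by
  simpa only [mul_sub] using summable_weight_mul_stepCost.sub (summable_weight.mul_right r)

lemma tsum_weight_mul_stepCost_sub (r : ℝ) :
    ∑' k, weight k * (stepCost k - r) = ∑' k, weight k * stepCost k - r * ∑' k, weight k := by
  simp only [mul_sub]
  rw [summable_weight_mul_stepCost.tsum_sub (summable_weight.mul_right r), tsum_mul_right, mul_comm]

lemma lt_tsum_weight_mul_stepCost : 2.01 * ∑' k, weight k < ∑' k, weight k * stepCost k := by
  have htail (k : ℕ) (hk : k ∉ range 4) : 0 ≤ weight k * (stepCost k - 2.01) := by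
    have hcalls := exp_one_le_callsCost (by simp at hk; omega : 2 ≤ k)
    have := halfSqIntegral_nonneg k
    exact mul_nonneg (weight_nonneg k) (by rw [stepCost]; linarith [exp_one_gt_d9])
  have hhead := (summable_weight_mul_stepCost_sub 2.01).sum_le_tsum (range 4) htail
  rw [tsum_weight_mul_stepCost_sub] at hhead
  simp only [sum_range_succ, range_zero, sum_empty, zero_add, weight_zero, one_mul] at hhead
  have h1 := mul_le_mul (weight_bounds 1).1 (sub_le_sub_right stepCost_one_bounds.1 2.01)
    (by norm_num) (weight_nonneg 1)
  have h2 := mul_le_mul (weight_bounds 2).1 (sub_le_sub_right stepCost_two_bounds.1 2.01)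
    (by norm_num) (weight_nonneg 2)
  have h3 := mul_le_mul (weight_bounds 3).1 (sub_le_sub_right stepCost_three_bounds.1 2.01)
    (by norm_num) (weight_nonneg 3)
  norm_num at h1 h2 h3
  linarith [stepCost_zero_bounds.1]

lemma tsum_weight_mul_stepCost_lt : ∑' k, weight k * stepCost k < 2.02 * ∑' k, weight k := by
  have htail (j : ℕ) : weight (j + 4) * (stepCost (j + 4) - 2.02) ≤ 0.00272 * 0.037 ^ j :=
    (mul_le_mul_of_nonneg_left (by linarith [stepCost_le (j + 4)]) (weight_nonneg _)).trans
      (weight_add_four_mul_le j)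
  have hbound := tsum_le_sum_range_add_geometric (summable_weight_mul_stepCost_sub 2.02) 4
    (by norm_num) (by norm_num) htail
  rw [tsum_weight_mul_stepCost_sub] at hbound
  simp only [sum_range_succ, range_zero, sum_empty, zero_add, weight_zero, one_mul] at hbound
  have h1 := mul_le_mul (weight_bounds 1).2 (sub_le_sub_right stepCost_one_bounds.2 2.02)
    (by linarith [stepCost_one_bounds.1]) (by norm_num)
  have h2 := mul_le_mul (weight_bounds 2).2 (sub_le_sub_right stepCost_two_bounds.2 2.02)
    (by linarith [stepCost_two_bounds.1]) (by norm_num)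
  have h3 := mul_le_mul (weight_bounds 3).2 (sub_le_sub_right stepCost_three_bounds.2 2.02)
    (by linarith [stepCost_three_bounds.1]) (by norm_num)
  norm_num at h1 h2 h3 hbound
  linarith [stepCost_zero_bounds.2]

lemma tsum_expected_deviates_eq :
    (∑' k, weight (k + 1) / (∑' j, weight j) * callsCost (k + 1)) +
        ∑' k, weight k / (∑' j, weight j) * halfSqIntegral k =
      (∑' k, weight k * stepCost k) / ∑' j, weight j := by
  have hcalls := summable_weight_mul_of_le callsCost_nonneg
    fun k => le_add_of_nonneg_right (halfSqIntegral_nonneg k)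
  have hhalfSq := summable_weight_mul_of_le (fun k => halfSqIntegral_nonneg k)
    fun k => le_add_of_nonneg_left (callsCost_nonneg k)
  have hshift := hcalls.tsum_eq_zero_add
  simp only [callsCost_eq_sum_moment 0, range_zero, sum_empty, mul_zero, zero_add] at hshift
  simp only [div_mul_eq_mul_div, tsum_div_const, ← add_div]
  rw [← hshift, ← hcalls.tsum_add hhalfSq]
  simp only [stepCost, mul_add]

end DiscreteGaussian

open DiscreteGaussian

/-- The expected number of uniform deviates used by steps 3 and 4 of the improved
Algorithm 7: with `D(k) = e^{−k²/2} / ∑_{j≥0} e^{−j²/2}` and, for `k ≥ 1`,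
`t_k(x) = ∑_{i=1}^{k−1} i e^{−x(i−1)} (1 − e^{−x}) + k e^{−x(k−1)}`,
the quantity
`W = ∑_{k=1}^{∞} D(k) ∫₀¹ t_k(x) e^{x} dx
   + ∑_{k=0}^{∞} D(k) ∫₀¹ (((1+x) e^{x²/2} − 1)/x) e^{−kx} dx`
satisfies `2.01 < W < 2.02`.  (The first series is reindexed by `k ↦ k + 1`.) -/
theorem improved_step34_expected_deviates :
    let D : ℕ → ℝ := fun k =>
      Real.exp (-(k : ℝ) ^ 2 / 2) / ∑' j : ℕ, Real.exp (-(j : ℝ) ^ 2 / 2)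
    let t : ℕ → ℝ → ℝ := fun k x =>
      (∑ i ∈ Finset.Icc 1 (k - 1),
          (i : ℝ) * Real.exp (-x * ((i : ℝ) - 1)) * (1 - Real.exp (-x))) +
        (k : ℝ) * Real.exp (-x * ((k : ℝ) - 1))
    let W : ℝ :=
      (∑' k : ℕ, D (k + 1) * ∫ x in (0 : ℝ)..1, t (k + 1) x * Real.exp x) +
        ∑' k : ℕ, D k *
          ∫ x in (0 : ℝ)..1,
            ((1 + x) * Real.exp (x ^ 2 / 2) - 1) / x * Real.exp (-(k : ℝ) * x)
    2.01 < W ∧ W < 2.02 := by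
  intro D t W
  have hS : 0 < ∑' j, weight j := summable_weight.tsum_pos weight_nonneg 0 (by simp [weight_zero])
  have hW : W = (∑' k, weight k * stepCost k) / ∑' j, weight j := tsum_expected_deviates_eq
  rw [hW, lt_div_iff₀ hS, div_lt_iff₀ hS]
  exact ⟨lt_tsum_weight_mul_stepCost, tsum_weight_mul_stepCost_lt⟩
end
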